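/- arXiv:2304.05508 — 11 statements merged into one kernel-verified Lean document; each statement's English description precedes it below -/
import Mathlib

section
/- If R is a residuated lattice based on M_X with ⊥ ≠ ⊤, then ⊤ is central in R (⊤·x = x·⊤ for all x ∈ R) and every element of R \ {⊥, ⊤} lies in exactly one of the sets U and Z; that is, R is the disjoint union U ⊔ Z ⊔ {⊥, ⊤}. -/
/-- In a residuated lattice based on `M_X` (with `⊥ ≠ ⊤`), the top is central and every
non-bound element lies in exactly one of `U = {x | x·⊤ = ⊤}` and `Z = {x | x·⊤ = x}`. -/
theorem stmt_4 {R : Type*} [Lattice R] [BoundedOrder R] [Monoid R]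
    (ld rd : R → R → R)
    (hl : ∀ x y z : R, x * y ≤ z ↔ y ≤ ld x z)
    (hr : ∀ x y z : R, x * y ≤ z ↔ x ≤ rd z y)
    (hbt : (⊥ : R) ≠ ⊤)
    (hMX : ∀ x y : R, x ≠ ⊥ → x ≠ ⊤ → y ≠ ⊥ → y ≠ ⊤ → x ≠ y → x ⊔ y = ⊤ ∧ x ⊓ y = ⊥) :
    (∀ x : R, ⊤ * x = x * ⊤) ∧
      ∀ x : R, x ≠ ⊥ → x ≠ ⊤ →
        (x * ⊤ = ⊤ ∧ x * ⊤ ≠ x) ∨ (x * ⊤ = x ∧ x * ⊤ ≠ ⊤) := by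
  -- basic consequences of residuation
  have monoR : ∀ x y z : R, y ≤ z → x * y ≤ x * z := by
    intro x y z h
    exact (hl x y (x * z)).2 (le_trans h ((hl x z (x * z)).1 le_rfl))
  have monoL : ∀ x y z : R, y ≤ z → y * x ≤ z * x := by
    intro x y z h
    exact (hr y x (z * x)).2 (le_trans h ((hr z x (z * x)).1 le_rfl))
  have mul_bot : ∀ x : R, x * (⊥ : R) = ⊥ := fun x =>
    le_antisymm ((hl x ⊥ ⊥).2 bot_le) bot_le
  have bot_mul : ∀ x : R, (⊥ : R) * x = ⊥ := fun x =>
    le_antisymm ((hr ⊥ x ⊥).2 bot_le) bot_le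
  have mul_sup : ∀ a b c : R, a * (b ⊔ c) = a * b ⊔ a * c := by
    intro a b c
    refine le_antisymm ?_ (sup_le (monoR a b (b ⊔ c) le_sup_left)
      (monoR a c (b ⊔ c) le_sup_right))
    exact (hl a (b ⊔ c) _).2 (sup_le ((hl a b _).1 le_sup_left) ((hl a c _).1 le_sup_right))
  have sup_mul : ∀ a b c : R, (b ⊔ c) * a = b * a ⊔ c * a := by
    intro a b c
    refine le_antisymm ?_ (sup_le (monoL a b (b ⊔ c) le_sup_left)
      (monoL a c (b ⊔ c) le_sup_right))
    exact (hr (b ⊔ c) a _).2 (sup_le ((hr b a _).1 le_sup_left) ((hr c a _).1 le_sup_right))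
  have h1bot : (1 : R) ≠ ⊥ := by
    intro h
    apply hbt
    have : (⊤ : R) = 1 * ⊤ := (one_mul ⊤).symm
    rw [h, bot_mul] at this
    exact this.symm
  constructor
  · intro x
    by_cases hx0 : x = ⊥
    · rw [hx0, bot_mul, mul_bot]
    by_cases hxT : x = ⊤
    · rw [hxT]
    by_cases hx1 : x = 1
    · rw [hx1, one_mul, mul_one]
    by_cases h1T : (1 : R) = ⊤
    · rw [← h1T, one_mul, mul_one]
    · have hsup := (hMX x 1 hx0 hxT h1bot h1T hx1).1
      calc ⊤ * x = (x ⊔ 1) * x := by rw [hsup]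
        _ = x * x ⊔ 1 * x := sup_mul x x 1
        _ = x * x ⊔ x * 1 := by rw [one_mul, mul_one]
        _ = x * (x ⊔ 1) := (mul_sup x x 1).symm
        _ = x * ⊤ := by rw [hsup]
  · intro x hx0 hxT
    have hle : x ≤ x * ⊤ := by
      have := monoR x 1 ⊤ le_top
      rwa [mul_one] at this
    by_cases hT : x * ⊤ = ⊤
    · exact Or.inl ⟨hT, by rw [hT]; exact Ne.symm hxT⟩
    · refine Or.inr ⟨?_, fun h => hT h⟩
      by_contra h
      have hb : x * ⊤ ≠ ⊥ := fun hb => hx0 (le_bot_iff.1 (hb ▸ hle))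
      have := (hMX x (x * ⊤) hx0 hxT hb hT (fun he => h he.symm)).2
      rw [inf_eq_left.2 hle] at this
      exact hx0 this
end

section
/- If R is a residuated lattice based on M_X with ⊥ ≠ ⊤, then U ∪ {⊤} is a submonoid of R (it contains 1 and is closed under multiplication), ⊤ is an absorbing element of U ∪ {⊤}, and U ∪ {⊤} is ⊤-cancellative: for all x, y, z ∈ U ∪ {⊤}, if x·y = x·z ≠ ⊤ then y = z, and if y·x = z·x ≠ ⊤ then y = z. -/
/-- In a residuated lattice based on `M_X` (with `⊥ ≠ ⊤`), `U ∪ {⊤}` is a submonoid with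
absorbing element `⊤` which is `⊤`-cancellative. -/
theorem stmt_5 {R : Type*} [Lattice R] [BoundedOrder R] [Monoid R]
    (ld rd : R → R → R)
    (hl : ∀ x y z : R, x * y ≤ z ↔ y ≤ ld x z)
    (hr : ∀ x y z : R, x * y ≤ z ↔ x ≤ rd z y)
    (hbt : (⊥ : R) ≠ ⊤)
    (hMX : ∀ x y : R, x ≠ ⊥ → x ≠ ⊤ → y ≠ ⊥ → y ≠ ⊤ → x ≠ y → x ⊔ y = ⊤ ∧ x ⊓ y = ⊥) :
    let U : Set R := {x | x ≠ ⊥ ∧ x ≠ ⊤ ∧ x * ⊤ = ⊤}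
    let S : Set R := insert ⊤ U
    (1 : R) ∈ S ∧
    (∀ x ∈ S, ∀ y ∈ S, x * y ∈ S) ∧
    (∀ x ∈ S, x * ⊤ = ⊤ ∧ ⊤ * x = ⊤) ∧
    (∀ x ∈ S, ∀ y ∈ S, ∀ z ∈ S,
      (x * y = x * z → x * y ≠ ⊤ → y = z) ∧ (y * x = z * x → y * x ≠ ⊤ → y = z)) := by
  intro U S
  -- monotonicity of multiplication
  have mono_r : ∀ (x : R) {y z : R}, y ≤ z → x * y ≤ x * z := by
    intro x y z h
    exact (hl x y (x * z)).2 (h.trans ((hl x z (x * z)).1 le_rfl))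
  have mono_l : ∀ (x : R) {y z : R}, y ≤ z → y * x ≤ z * x := by
    intro x y z h
    exact (hr y x (z * x)).2 (h.trans ((hr z x (z * x)).1 le_rfl))
  have mul_bot : ∀ x : R, x * ⊥ = ⊥ := fun x =>
    le_antisymm ((hl x ⊥ ⊥).2 bot_le) bot_le
  have top_mul_top : (⊤ : R) * ⊤ = ⊤ :=
    top_unique (by nth_rewrite 1 [← mul_one (⊤ : R)]; exact mono_r ⊤ le_top)
  have one_ne_bot : (1 : R) ≠ ⊥ := by
    intro h
    apply hbt
    rw [← mul_bot ⊤, ← h, mul_one]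
  -- key lemma: for x ∈ U, ⊤ * x = ⊤
  have L : ∀ x : R, x ∈ U → ⊤ * x = ⊤ := by
    intro x hx
    obtain ⟨hxb, hxt, hxT⟩ := hx
    have h1t : (1 : R) ≠ ⊤ := by
      intro h
      exact hxt (by rw [← hxT, ← h, mul_one])
    have hx_le : x ≤ ⊤ * x := by
      nth_rewrite 1 [← one_mul x]
      exact mono_l x le_top
    by_contra hne
    have hTx : ⊤ * x = x := by
      by_contra h2
      have hnb : ⊤ * x ≠ ⊥ := fun h => hxb (le_bot_iff.1 (h ▸ hx_le))
      have hinf := (hMX x (⊤ * x) hxb hxt hnb hne (fun h => h2 h.symm)).2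
      rw [inf_eq_left.2 hx_le] at hinf
      exact hxb hinf
    have hx1 : x ≠ 1 := fun h => hne (by rw [h, mul_one])
    have hsup : x ⊔ 1 = ⊤ := (hMX x 1 hxb hxt one_ne_bot h1t hx1).1
    have hxx : x * x ≤ x := by
      nth_rewrite 3 [← hTx]
      exact mono_l x le_top
    have hle : x ⊔ 1 ≤ ld x x :=
      sup_le ((hl x x x).1 hxx) ((hl x 1 x).1 (le_of_eq (mul_one x)))
    rw [hsup] at hle
    have : x * ⊤ ≤ x := (hl x ⊤ x).2 hle
    rw [hxT] at this
    exact hxt (top_le_iff.1 this)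
  -- absorbing property, stated for all of S
  have habs : ∀ x ∈ S, x * ⊤ = ⊤ ∧ ⊤ * x = ⊤ := by
    intro x hx
    rcases hx with h | h
    · subst h; exact ⟨top_mul_top, top_mul_top⟩
    · exact ⟨h.2.2, L x h⟩
  refine ⟨?_, ?_, habs, ?_⟩
  · -- 1 ∈ S
    by_cases h1 : (1 : R) = ⊤
    · exact Or.inl h1
    · exact Or.inr ⟨one_ne_bot, h1, one_mul ⊤⟩
  · -- closure
    intro x hx y hy
    rcases hy with hy | hy
    · subst hy
      exact Or.inl (habs x hx).1
    rcases hx with hx | hx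
    · subst hx
      exact Or.inl (L y hy)
    · have hprod : (x * y) * ⊤ = ⊤ := by rw [mul_assoc, hy.2.2, hx.2.2]
      by_cases ht : x * y = ⊤
      · exact Or.inl ht
      · refine Or.inr ⟨?_, ht, hprod⟩
        intro hb
        rw [hb] at hprod
        rw [le_antisymm ((hr ⊥ ⊤ ⊥).2 bot_le) bot_le] at hprod
        exact hbt hprod
  · -- cancellativity
    intro x hx y hy z hz
    have hxU : x * ⊤ = ⊤ := (habs x hx).1
    have hTxU : ⊤ * x = ⊤ := (habs x hx).2
    constructor
    · intro heq hne
      have hyU : y ∈ U := by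
        rcases hy with hy | hy
        · exact absurd (by rw [hy, hxU]) hne
        · exact hy
      have hzU : z ∈ U := by
        rcases hz with hz | hz
        · exact absurd (by rw [heq, hz, hxU]) hne
        · exact hz
      by_contra hyz
      have hsup : y ⊔ z = ⊤ := (hMX y z hyU.1 hyU.2.1 hzU.1 hzU.2.1 hyz).1
      have hle : y ⊔ z ≤ ld x (x * y) :=
        sup_le ((hl x y (x * y)).1 le_rfl) ((hl x z (x * y)).1 (le_of_eq heq.symm))
      rw [hsup] at hle
      have : x * ⊤ ≤ x * y := (hl x ⊤ (x * y)).2 hle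
      rw [hxU] at this
      exact hne (top_le_iff.1 this)
    · intro heq hne
      have hyU : y ∈ U := by
        rcases hy with hy | hy
        · refine absurd ?_ hne
          rw [hy]
          rcases hx with hx | hx
          · rw [hx]; exact top_mul_top
          · exact L x hx
        · exact hy
      have hzU : z ∈ U := by
        rcases hz with hz | hz
        · refine absurd ?_ hne
          rw [heq, hz]
          rcases hx with hx | hx
          · rw [hx]; exact top_mul_top
          · exact L x hx
        · exact hz
      by_contra hyz
      have hsup : y ⊔ z = ⊤ := (hMX y z hyU.1 hyU.2.1 hzU.1 hzU.2.1 hyz).1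
      have hle : y ⊔ z ≤ rd (y * x) x :=
        sup_le ((hr y x (y * x)).1 le_rfl) ((hr z x (y * x)).1 (le_of_eq heq.symm))
      rw [hsup] at hle
      have : ⊤ * x ≤ y * x := (hr ⊤ x (y * x)).2 hle
      rw [hTxU] at this
      exact hne (top_le_iff.1 this)
end

section
/- If R is a residuated lattice based on M_X with ⊥ ≠ ⊤, then Z ∪ {⊥} is closed under multiplication and ⊥ is its absorbing element, Z has at most two elements, x·y = ⊥ for all distinct x, y ∈ Z ∪ {⊥}, and either every element of Z ∪ {⊥} is idempotent, or Z = {b} for a single element b with b² = ⊥. -/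
/-- In a residuated lattice based on `M_X` (with `⊥ ≠ ⊤`), `Z ∪ {⊥}` is a subsemigroup with
zero `⊥`, `Z` has at most two elements, distinct elements of `Z ∪ {⊥}` multiply to `⊥`, and
either `Z ∪ {⊥}` is idempotent or `Z = {b}` with `b² = ⊥`. -/
theorem stmt_6 {R : Type*} [Lattice R] [BoundedOrder R] [Monoid R]
    (ld rd : R → R → R)
    (hl : ∀ x y z : R, x * y ≤ z ↔ y ≤ ld x z)
    (hr : ∀ x y z : R, x * y ≤ z ↔ x ≤ rd z y)
    (hbt : (⊥ : R) ≠ ⊤)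
    (hMX : ∀ x y : R, x ≠ ⊥ → x ≠ ⊤ → y ≠ ⊥ → y ≠ ⊤ → x ≠ y → x ⊔ y = ⊤ ∧ x ⊓ y = ⊥) :
    let Z : Set R := {x | x ≠ ⊥ ∧ x ≠ ⊤ ∧ x * ⊤ = x}
    let Zb : Set R := insert ⊥ Z
    (∀ x ∈ Zb, ∀ y ∈ Zb, x * y ∈ Zb) ∧
    (∀ x ∈ Zb, x * ⊥ = ⊥ ∧ ⊥ * x = ⊥) ∧
    (∀ x ∈ Z, ∀ y ∈ Z, ∀ z ∈ Z, x = y ∨ x = z ∨ y = z) ∧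
    (∀ x ∈ Zb, ∀ y ∈ Zb, x ≠ y → x * y = ⊥) ∧
    ((∀ x ∈ Zb, x * x = x) ∨ ∃ b : R, Z = {b} ∧ b * b = ⊥) := by
  intro Z Zb
  -- ⊥ is absorbing
  have mbot : ∀ x : R, x * ⊥ = ⊥ := fun x =>
    le_bot_iff.mp ((hl x ⊥ ⊥).mpr bot_le)
  have botm : ∀ x : R, ⊥ * x = ⊥ := fun x =>
    le_bot_iff.mp ((hr ⊥ x ⊥).mpr bot_le)
  -- monotonicity
  have monoR : ∀ x a b : R, a ≤ b → x * a ≤ x * b := fun x a b h =>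
    (hl x a (x * b)).mpr (h.trans ((hl x b (x * b)).mp le_rfl))
  have monoL : ∀ x a b : R, a ≤ b → a * x ≤ b * x := fun x a b h =>
    (hr a x (b * x)).mpr (h.trans ((hr b x (b * x)).mp le_rfl))
  -- distributivity over join
  have distL : ∀ x a b : R, x * (a ⊔ b) = x * a ⊔ x * b := by
    intro x a b
    apply le_antisymm
    · exact (hl x (a ⊔ b) _).mpr (sup_le ((hl x a _).mp le_sup_left)
        ((hl x b _).mp le_sup_right))
    · exact sup_le (monoR x a (a ⊔ b) le_sup_left) (monoR x b (a ⊔ b) le_sup_right)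
  have distR : ∀ x a b : R, (a ⊔ b) * x = a * x ⊔ b * x := by
    intro x a b
    apply le_antisymm
    · exact (hr (a ⊔ b) x _).mpr (sup_le ((hr a x _).mp le_sup_left)
        ((hr b x _).mp le_sup_right))
    · exact sup_le (monoL x a (a ⊔ b) le_sup_left) (monoL x b (a ⊔ b) le_sup_right)
  have one_ne_bot : (1 : R) ≠ ⊥ := by
    intro h
    apply hbt
    have : (⊤ : R) * 1 = ⊤ := mul_one ⊤
    rw [h, mbot] at this
    exact this
  -- key lemma : ⊤ * x = x for x ∈ Z
  have L1 : ∀ x : R, x ∈ Z → ⊤ * x = x := by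
    intro x hx
    obtain ⟨hxb, hxt, hxT⟩ := hx
    have hxle : x ≤ ⊤ * x := by
      calc x = 1 * x := (one_mul x).symm
        _ ≤ ⊤ * x := monoL x 1 ⊤ le_top
    -- x * x ≤ x
    have hx2 : x * x ≤ x := by
      calc x * x ≤ x * ⊤ := monoR x x ⊤ le_top
        _ = x := hxT
    -- cases on 1
    by_cases h1t : (1 : R) = ⊤
    · rw [← h1t, one_mul]
    · have h1x : (1 : R) ≠ x := by
        intro h
        rw [← h, one_mul] at hxT
        exact h1t hxT.symm
      have hsup : (1 : R) ⊔ x = ⊤ := (hMX 1 x one_ne_bot h1t hxb hxt h1x).1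
      have h1le : (1 : R) ≤ rd x x := (hr 1 x x).mp (by rw [one_mul])
      have hxle' : x ≤ rd x x := (hr x x x).mp hx2
      have : (⊤ : R) ≤ rd x x := by rw [← hsup]; exact sup_le h1le hxle'
      exact le_antisymm ((hr ⊤ x x).mpr this) hxle
  -- squares: x*x = ⊥ or x*x = x for x ∈ Z
  have hsq : ∀ x : R, x ∈ Z → x * x = ⊥ ∨ x * x = x := by
    intro x hx
    obtain ⟨hxb, hxt, hxT⟩ := hx
    have hx2 : x * x ≤ x := by
      calc x * x ≤ x * ⊤ := monoR x x ⊤ le_top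
        _ = x := hxT
    by_cases h0 : x * x = ⊥
    · exact Or.inl h0
    by_cases h1 : x * x = x
    · exact Or.inr h1
    · exfalso
      have hne : x * x ≠ ⊤ := fun h => hxt (top_le_iff.mp (h ▸ hx2))
      have := (hMX (x * x) x h0 hne hxb hxt h1).2
      rw [inf_eq_left.mpr hx2] at this
      exact h0 this
  -- distinct elements of Z multiply to ⊥
  have hdist : ∀ x ∈ Z, ∀ y ∈ Z, x ≠ y → x * y = ⊥ := by
    intro x hx y hy hxy
    obtain ⟨hxb, hxt, hxT⟩ := hx
    obtain ⟨hyb, hyt, _⟩ := id hy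
    have h1 : x * y ≤ x := by
      calc x * y ≤ x * ⊤ := monoR x y ⊤ le_top
        _ = x := hxT
    have h2 : x * y ≤ y := by
      calc x * y ≤ ⊤ * y := monoL y x ⊤ le_top
        _ = y := L1 y hy
    have := (hMX x y hxb hxt hyb hyt hxy).2
    exact le_bot_iff.mp (this ▸ le_inf h1 h2)
  -- membership in Zb of products from Z
  have hZmem : ∀ x : R, x ∈ Z ↔ (x ≠ ⊥ ∧ x ≠ ⊤ ∧ x * ⊤ = x) := fun x => Iff.rfl
  refine ⟨?_, ?_, ?_, ?_, ?_⟩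
  · -- closure
    intro x hx y hy
    rcases hx with hx | hx
    · left; rw [hx, botm]
    rcases hy with hy | hy
    · left; rw [hy, mbot]
    by_cases hxy : x = y
    · subst hxy
      rcases hsq x hx with h | h
      · left; exact h
      · right; rw [h]; exact hx
    · left; exact hdist x hx y hy hxy
  · -- absorbing
    intro x _
    exact ⟨mbot x, botm x⟩
  · -- at most two elements
    intro x hx y hy z hz
    by_contra h
    push_neg at h
    obtain ⟨hxy, hxz, hyz⟩ := h
    obtain ⟨hxb, hxt, hxT⟩ := hx
    obtain ⟨hyb, hyt, _⟩ := id hy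
    obtain ⟨hzb, hzt, _⟩ := id hz
    have hsup : y ⊔ z = ⊤ := (hMX y z hyb hyt hzb hzt hyz).1
    have : x = ⊥ := by
      calc x = x * ⊤ := hxT.symm
        _ = x * (y ⊔ z) := by rw [hsup]
        _ = x * y ⊔ x * z := distL x y z
        _ = ⊥ ⊔ ⊥ := by rw [hdist x ⟨hxb, hxt, hxT⟩ y hy hxy,
            hdist x ⟨hxb, hxt, hxT⟩ z hz hxz]
        _ = ⊥ := bot_sup_eq ⊥
    exact hxb this
  · -- distinct multiply to ⊥
    intro x hx y hy hxy
    rcases hx with hx | hx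
    · rw [hx, botm]
    rcases hy with hy | hy
    · rw [hy, mbot]
    exact hdist x hx y hy hxy
  · -- idempotent or Z = {b} with b² = ⊥
    by_cases h : ∀ x ∈ Z, x * x = x
    · left
      intro x hx
      rcases hx with hx | hx
      · rw [hx, mbot]
      · exact h x hx
    · right
      push_neg at h
      obtain ⟨b, hb, hbsq⟩ := h
      have hb2 : b * b = ⊥ := (hsq b hb).resolve_right hbsq
      refine ⟨b, ?_, hb2⟩
      ext c
      simp only [Set.mem_singleton_iff]
      constructor
      · intro hc
        by_contra hcb
        obtain ⟨hbb, hbt', hbT⟩ := id hb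
        obtain ⟨hcb', hct, _⟩ := id hc
        have hsup : b ⊔ c = ⊤ := (hMX b c hbb hbt' hcb' hct (Ne.symm hcb)).1
        apply hbb
        calc b = b * ⊤ := hbT.symm
          _ = b * (b ⊔ c) := by rw [hsup]
          _ = b * b ⊔ b * c := distL b b c
          _ = ⊥ ⊔ ⊥ := by rw [hb2, hdist b hb c hc (Ne.symm hcb)]
          _ = ⊥ := bot_sup_eq ⊥
      · intro hc; rw [hc]; exact hb
end

section
/- If R is a residuated lattice based on M_X with ⊥ ≠ ⊤, then a·b = b·a = b for all a ∈ U and b ∈ Z. -/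
/-- In a residuated lattice based on `M_X` (with `⊥ ≠ ⊤`), `a·b = b·a = b` for all
`a ∈ U` and `b ∈ Z`. -/
theorem stmt_7 {R : Type*} [Lattice R] [BoundedOrder R] [Monoid R]
    (ld rd : R → R → R)
    (hl : ∀ x y z : R, x * y ≤ z ↔ y ≤ ld x z)
    (hr : ∀ x y z : R, x * y ≤ z ↔ x ≤ rd z y)
    (hbt : (⊥ : R) ≠ ⊤)
    (hMX : ∀ x y : R, x ≠ ⊥ → x ≠ ⊤ → y ≠ ⊥ → y ≠ ⊤ → x ≠ y → x ⊔ y = ⊤ ∧ x ⊓ y = ⊥) :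
    ∀ a b : R, (a ≠ ⊥ ∧ a ≠ ⊤ ∧ a * ⊤ = ⊤) → (b ≠ ⊥ ∧ b ≠ ⊤ ∧ b * ⊤ = b) →
      a * b = b ∧ b * a = b := by
  -- monotonicity of multiplication in each argument
  have monoL : ∀ x y z : R, x ≤ y → z * x ≤ z * y := fun x y z h =>
    (hl z x (z * y)).mpr (h.trans ((hl z y (z * y)).mp le_rfl))
  have monoR : ∀ x y z : R, x ≤ y → x * z ≤ y * z := fun x y z h =>
    (hr x z (y * z)).mpr (h.trans ((hr y z (y * z)).mp le_rfl))
  -- annihilation by ⊥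
  have mulbot : ∀ x : R, x * ⊥ = ⊥ := fun x => le_bot_iff.mp ((hl x ⊥ ⊥).mpr bot_le)
  have botmul : ∀ x : R, ⊥ * x = ⊥ := fun x => le_bot_iff.mp ((hr ⊥ x ⊥).mpr bot_le)
  -- distributivity over joins
  have distL : ∀ x y z : R, x * (y ⊔ z) = x * y ⊔ x * z := fun x y z =>
    le_antisymm
      ((hl _ _ _).mpr (sup_le ((hl _ _ _).mp le_sup_left) ((hl _ _ _).mp le_sup_right)))
      (sup_le (monoL _ _ _ le_sup_left) (monoL _ _ _ le_sup_right))
  have distR : ∀ x y z : R, (y ⊔ z) * x = y * x ⊔ z * x := fun x y z =>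
    le_antisymm
      ((hr _ _ _).mpr (sup_le ((hr _ _ _).mp le_sup_left) ((hr _ _ _).mp le_sup_right)))
      (sup_le (monoR _ _ _ le_sup_left) (monoR _ _ _ le_sup_right))
  rintro a b ⟨_ha1, ha2, ha3⟩ ⟨hb1, hb2, hb3⟩
  -- 1 is a "middle" element, distinct from b
  have h1b : (1 : R) ≠ ⊥ := fun h => hbt (by rw [← mulbot ⊤, ← h, mul_one])
  have h1t : (1 : R) ≠ ⊤ := fun h => ha2 (by rw [← ha3, ← h, mul_one])
  have hb1' : b ≠ 1 := fun h => hb2 (by rw [← hb3, h, one_mul])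
  -- step 1 : b * a = b
  have hba_le : b * a ≤ b := le_of_le_of_eq (monoL a ⊤ b le_top) hb3
  have hba_top : (b * a) * ⊤ = b := by rw [mul_assoc, ha3, hb3]
  have hba_ne_bot : b * a ≠ ⊥ := fun h => hb1 (by rw [← hba_top, h, botmul])
  have hba : b * a = b := by
    by_contra hne
    have hnet : b * a ≠ ⊤ := fun h => hb2 (top_le_iff.mp (h ▸ hba_le))
    have hinf := (hMX (b * a) b hba_ne_bot hnet hb1 hb2 hne).2
    exact hba_ne_bot ((inf_eq_left.mpr hba_le).symm.trans hinf)
  -- ⊤ = 1 ⊔ b, hence ⊤ * b = b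
  have hsup : (1 : R) ⊔ b = ⊤ := (hMX 1 b h1b h1t hb1 hb2 (Ne.symm hb1')).1
  have htb : ⊤ * b = b := by
    rw [← hsup, distR, one_mul]
    exact sup_eq_left.mpr (le_of_le_of_eq (monoL b ⊤ b le_top) hb3)
  -- step 2 : a * b = b
  have hab_le : a * b ≤ b := le_of_le_of_eq (monoR a ⊤ b le_top) htb
  have hab_ne_bot : a * b ≠ ⊥ := fun h => ha2 (by
    have hA : a * ⊤ = a := by rw [← hsup, distL, mul_one, h, sup_bot_eq]
    rw [← ha3, hA])
  have hab : a * b = b := by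
    by_contra hne
    have hnet : a * b ≠ ⊤ := fun h => hb2 (top_le_iff.mp (h ▸ hab_le))
    have hinf := (hMX (a * b) b hab_ne_bot hnet hb1 hb2 hne).2
    exact hab_ne_bot ((inf_eq_left.mpr hab_le).symm.trans hinf)
  exact ⟨hab, hba⟩
end

section
/- Let A be a monoid with an absorbing element ⊤ that is ⊤-cancellative, and let B be a semigroup with an absorbing element ⊥ such that B has at most 3 elements, x·y = ⊥ for all distinct x, y ∈ B, b² ∈ {b, ⊥} for every b ∈ B, and if b² = ⊥ for some b ∈ B \ {⊥} then B = {⊥, b}. Let R = A ⊔ B (disjoint union) with multiplication extending those of A and B by x·y = y·x = y for all x ∈ A and y ∈ B, and with the partial order in which ⊥ is the bottom, ⊤ is the top, and all other elements are pairwise incomparable (so distinct elements of R \ {⊥, ⊤} have join ⊤ and meet ⊥). Then R is a lattice-ordered monoid in which multiplication is order-preserving and distributes over binary joins, and for all x, z ∈ R the sets {y : x·y ≤ z} and {y : y·x ≤ z} have maximum elements; hence R is the reduct of a residuated lattice based on M_X with X = (A ∪ B) \ {⊥, ⊤}. -/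
/-- Multiplication on the disjoint union `A ⊔ B`, extending those of `A` and `B` by
`x·y = y·x = y` for `x ∈ A`, `y ∈ B`. -/
def RMul8 {A B : Type*} [Mul A] [Mul B] : (A ⊕ B) → (A ⊕ B) → (A ⊕ B)
  | Sum.inl a, Sum.inl a' => Sum.inl (a * a')
  | Sum.inl _, Sum.inr b => Sum.inr b
  | Sum.inr b, Sum.inl _ => Sum.inr b
  | Sum.inr b, Sum.inr b' => Sum.inr (b * b')

/-- The order on `A ⊔ B` with bottom `⊥ ∈ B`, top `⊤ ∈ A`, and all other elements pairwise
incomparable. -/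
def RLe8 {A B : Type*} (top : A) (bot : B) (x y : A ⊕ B) : Prop :=
  x = y ∨ x = Sum.inr bot ∨ y = Sum.inl top

open scoped Classical in
/-- Join in the lattice `M_X` on `A ⊔ B`. -/
noncomputable def RJoin8 {A B : Type*} (top : A) (bot : B) (x y : A ⊕ B) : A ⊕ B :=
  if x = y then x else if x = Sum.inr bot then y
  else if y = Sum.inr bot then x else Sum.inl top

open scoped Classical in
/-- Meet in the lattice `M_X` on `A ⊔ B`. -/
noncomputable def RMeet8 {A B : Type*} (top : A) (bot : B) (x y : A ⊕ B) : A ⊕ B :=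
  if x = y then x else if x = Sum.inl top then y
  else if y = Sum.inl top then x else Sum.inr bot

/-!
Fix `x`. Both one-sided multiplications by `x` send `⊥` to `⊥` and every element below the image
of `⊤`, which on `M_X` already makes them monotone. A monotone map for which every set
`{y | f y ≤ z}` has a maximum is the lower adjoint of a Galois connection, so it preserves joins;
hence everything reduces to these maxima.

For `x ∈ A` the multiplication is `g ⊕ id` with `g = (x * ·)` or `(· * x)`, and
`⊤`-cancellativity makes the preimage under `g` of any `z ≠ ⊤` at most a singleton.
For `x = b ∈ B` every product `b·c` lies in `{b, ⊥}`, so only the annihilator `{c | b·c = ⊥}`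
matters, and the restrictions on `B` leave it with at most one element besides `⊥`.
Since `B` is commutative, right multiplication by `b` agrees with left multiplication.
-/

section Order

variable {A B : Type*} {top : A} {bot : B} {x y z : A ⊕ B}

theorem RLe8.trans (hxy : RLe8 top bot x y) (hyz : RLe8 top bot y z) : RLe8 top bot x z := by
  rcases hxy with rfl | rfl | rfl <;> rcases hyz with rfl | h | rfl <;> simp_all [RLe8]

theorem RLe8.antisymm (hxy : RLe8 top bot x y) (hyx : RLe8 top bot y x) : x = y := by
  rcases hxy with rfl | rfl | rfl <;> rcases hyx with h | h | h <;> simp_all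

theorem rle8_rjoin8_left : RLe8 top bot x (RJoin8 top bot x y) := by
  unfold RJoin8 RLe8; split_ifs <;> simp_all

theorem rle8_rjoin8_right : RLe8 top bot y (RJoin8 top bot x y) := by
  unfold RJoin8 RLe8; split_ifs <;> simp_all

theorem rjoin8_rle8 (hx : RLe8 top bot x z) (hy : RLe8 top bot y z) :
    RLe8 top bot (RJoin8 top bot x y) z := by
  unfold RJoin8
  split_ifs <;> first
    | assumption
    | rcases hx with h | h | h <;> rcases hy with h' | h' | h' <;> simp_all [RLe8]

theorem rmeet8_rle8_left : RLe8 top bot (RMeet8 top bot x y) x := by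
  unfold RMeet8 RLe8; split_ifs <;> simp_all

theorem rmeet8_rle8_right : RLe8 top bot (RMeet8 top bot x y) y := by
  unfold RMeet8 RLe8; split_ifs <;> simp_all

theorem rle8_rmeet8 (hx : RLe8 top bot z x) (hy : RLe8 top bot z y) :
    RLe8 top bot z (RMeet8 top bot x y) := by
  unfold RMeet8
  split_ifs <;> first
    | assumption
    | rcases hx with h | h | h <;> rcases hy with h' | h' | h' <;> simp_all [RLe8]

end Order

section Residuated

variable {A B : Type*} {top : A} {bot : B}

variable (top bot) in
def RMonotone8 (f : A ⊕ B → A ⊕ B) : Prop :=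
  ∀ y z, RLe8 top bot y z → RLe8 top bot (f y) (f z)

variable (top bot) in
def RResiduated8 (f : A ⊕ B → A ⊕ B) : Prop :=
  ∀ z, ∃ m, RLe8 top bot (f m) z ∧ ∀ y, RLe8 top bot (f y) z → RLe8 top bot y m

theorem RMonotone8.map_rjoin8 {f : A ⊕ B → A ⊕ B} (hf : RMonotone8 top bot f)
    (hres : RResiduated8 top bot f) (y z : A ⊕ B) :
    f (RJoin8 top bot y z) = RJoin8 top bot (f y) (f z) := by
  obtain ⟨m, hm, hmax⟩ := hres (RJoin8 top bot (f y) (f z))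
  refine RLe8.antisymm ?_ (rjoin8_rle8 (hf _ _ rle8_rjoin8_left) (hf _ _ rle8_rjoin8_right))
  exact (hf _ _ (rjoin8_rle8 (hmax y rle8_rjoin8_left) (hmax z rle8_rjoin8_right))).trans hm

theorem rmonotone8_of_map_bot {f : A ⊕ B → A ⊕ B} (hbot : f (Sum.inr bot) = Sum.inr bot)
    (htop : ∀ y, RLe8 top bot (f y) (f (Sum.inl top))) : RMonotone8 top bot f := by
  rintro y z (rfl | rfl | rfl)
  · exact Or.inl rfl
  · rw [hbot]; exact Or.inr (Or.inl rfl)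
  · exact htop y

theorem exists_max_of_forall_eq_bot_or {f : A ⊕ B → A ⊕ B} {z m : A ⊕ B}
    (hm : RLe8 top bot (f m) z) (h : ∀ y, RLe8 top bot (f y) z → y = Sum.inr bot ∨ y = m) :
    ∃ m, RLe8 top bot (f m) z ∧ ∀ y, RLe8 top bot (f y) z → RLe8 top bot y m :=
  ⟨m, hm, fun y hy => by rcases h y hy with rfl | rfl <;> simp [RLe8]⟩

end Residuated

section SumMap

variable {A B : Type*} {top : A} {bot : B} {g : A → A}

theorem rmonotone8_sumMap (hg : g top = top) : RMonotone8 top bot (Sum.map g id) :=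
  rmonotone8_of_map_bot rfl fun _ => by simp [RLe8, hg]

theorem rresiduated8_sumMap (hg_inj : ∀ a a', g a = g a' → g a ≠ top → a = a') :
    RResiduated8 top bot (Sum.map g id) := by
  rintro (c | c)
  · by_cases hc : c = top
    · exact ⟨Sum.inl top, Or.inr (Or.inr (congrArg Sum.inl hc)), fun _ _ => Or.inr (Or.inr rfl)⟩
    by_cases h : ∃ a, g a = c
    · obtain ⟨a, rfl⟩ := h
      refine exists_max_of_forall_eq_bot_or (m := Sum.inl a) (Or.inl rfl) ?_
      rintro (a' | c') hy
      · have hga : g a' = g a := by simpa [RLe8, hc] using hy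
        exact Or.inr (congrArg Sum.inl (hg_inj a' a hga (hga ▸ hc)))
      · simp_all [RLe8]
    · refine exists_max_of_forall_eq_bot_or (m := Sum.inr bot) (Or.inr (Or.inl rfl)) ?_
      rintro (a' | c') hy <;> simp_all [RLe8]
  · refine exists_max_of_forall_eq_bot_or (m := Sum.inr c) (Or.inl rfl) ?_
    rintro (a' | c') hy <;> simp_all [RLe8, or_comm]

end SumMap

section ZeroPattern

variable {B : Type*} [Mul B] {bot : B}

theorem mul_comm_of_mul_ne (hBmul : ∀ x y : B, x ≠ y → x * y = bot) (c d : B) :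
    c * d = d * c := by
  rcases eq_or_ne c d with rfl | h
  · rfl
  · rw [hBmul c d h, hBmul d c h.symm]

theorem mul_eq_self_or_bot (hBmul : ∀ x y : B, x ≠ y → x * y = bot)
    (hBsq : ∀ b : B, b * b = b ∨ b * b = bot) (b c : B) : b * c = b ∨ b * c = bot := by
  rcases eq_or_ne b c with rfl | h
  · exact hBsq b
  · exact Or.inr (hBmul b c h)

theorem eq_bot_of_mul_eq_bot_of_ne
    (hBcard : ∀ x y z w : B, x = y ∨ x = z ∨ x = w ∨ y = z ∨ y = w ∨ z = w)
    (hBnil : ∀ b : B, b ≠ bot → b * b = bot → ∀ c : B, c = bot ∨ c = b)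
    {b c c' : B} (hcc' : c ≠ c') (hc : c ≠ bot) (hc' : c' ≠ bot)
    (h : b * c = bot) (h' : b * c' = bot) : b = bot := by
  by_contra hb
  rcases eq_or_ne b c with rfl | hbc
  · rcases hBnil b hb h c' with h'' | h''
    exacts [hc' h'', hcc' h''.symm]
  rcases eq_or_ne b c' with rfl | hbc'
  · rcases hBnil b hb h' c with h'' | h''
    exacts [hc h'', hcc' h'']
  rcases hBcard b c c' bot with h'' | h'' | h'' | h'' | h'' | h'' <;> contradiction

theorem exists_annihilator_subset_pair
    (hBcard : ∀ x y z w : B, x = y ∨ x = z ∨ x = w ∨ y = z ∨ y = w ∨ z = w)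
    (hBnil : ∀ b : B, b ≠ bot → b * b = bot → ∀ c : B, c = bot ∨ c = b)
    {b : B} (hb : b ≠ bot) (hb_bot : b * bot = bot) :
    ∃ m, b * m = bot ∧ ∀ c, b * c = bot → c = bot ∨ c = m := by
  by_cases h : ∃ m, m ≠ bot ∧ b * m = bot
  · obtain ⟨m, hm, hbm⟩ := h
    refine ⟨m, hbm, fun c hbc => ?_⟩
    by_contra! hne
    exact hb (eq_bot_of_mul_eq_bot_of_ne hBcard hBnil hne.2 hne.1 hm hbc hbm)
  · exact ⟨bot, hb_bot, fun c hbc => Or.inl (by_contra fun hc => h ⟨c, hc, hbc⟩)⟩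

end ZeroPattern

section RMul8

variable {A B : Type*} {top : A} {bot : B}

theorem rmul8_assoc [Semigroup A] [Mul B] (hBassoc : ∀ x y z : B, x * y * z = x * (y * z))
    (x y z : A ⊕ B) : RMul8 (RMul8 x y) z = RMul8 x (RMul8 y z) := by
  rcases x with _ | _ <;> rcases y with _ | _ <;> rcases z with _ | _ <;>
    simp [RMul8, mul_assoc, hBassoc]

theorem one_rmul8 [MulOneClass A] [Mul B] (x : A ⊕ B) : RMul8 (Sum.inl 1) x = x := by
  rcases x with _ | _ <;> simp [RMul8]

theorem rmul8_one [MulOneClass A] [Mul B] (x : A ⊕ B) : RMul8 x (Sum.inl 1) = x := by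
  rcases x with _ | _ <;> simp [RMul8]

theorem rmul8_inl_eq_sumMap [Mul A] [Mul B] (a : A) :
    RMul8 (B := B) (Sum.inl a) = Sum.map (a * ·) id := by
  funext y; rcases y with _ | _ <;> rfl

theorem rmul8_inl_right_eq_sumMap [Mul A] [Mul B] (a : A) :
    (RMul8 (B := B) · (Sum.inl a)) = Sum.map (· * a) id := by
  funext y; rcases y with _ | _ <;> rfl

theorem rmul8_inr_right_eq_left [Mul A] [Mul B] (hcomm : ∀ c d : B, c * d = d * c) (b : B) :
    (RMul8 (A := A) · (Sum.inr b)) = RMul8 (Sum.inr b) := by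
  funext y; rcases y with _ | c
  · rfl
  · simp [RMul8, hcomm c b]

variable [Mul A] [Mul B]

theorem rmonotone8_rmul8_inr (hBabs : ∀ b : B, bot * b = bot ∧ b * bot = bot)
    (hBmul : ∀ x y : B, x ≠ y → x * y = bot) (hBsq : ∀ b : B, b * b = b ∨ b * b = bot)
    (b : B) : RMonotone8 top bot (RMul8 (Sum.inr b)) := by
  refine rmonotone8_of_map_bot (by simp [RMul8, (hBabs b).2]) fun y => ?_
  rcases y with _ | c
  · exact Or.inl rfl
  · rcases mul_eq_self_or_bot hBmul hBsq b c with h | h <;> simp [RMul8, RLe8, h]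

theorem rresiduated8_rmul8_inr (hBabs : ∀ b : B, bot * b = bot ∧ b * bot = bot)
    (hBcard : ∀ x y z w : B, x = y ∨ x = z ∨ x = w ∨ y = z ∨ y = w ∨ z = w)
    (hBmul : ∀ x y : B, x ≠ y → x * y = bot) (hBsq : ∀ b : B, b * b = b ∨ b * b = bot)
    (hBnil : ∀ b : B, b ≠ bot → b * b = bot → ∀ c : B, c = bot ∨ c = b)
    (b : B) : RResiduated8 top bot (RMul8 (Sum.inr b)) := by
  intro z
  by_cases hbz : RLe8 top bot (Sum.inr b) z
  · exact ⟨Sum.inl top, hbz, fun _ _ => Or.inr (Or.inr rfl)⟩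
  have hb : b ≠ bot := by rintro rfl; exact hbz (Or.inr (Or.inl rfl))
  obtain ⟨m, hbm, hmax⟩ := exists_annihilator_subset_pair hBcard hBnil hb (hBabs b).2
  refine exists_max_of_forall_eq_bot_or (m := Sum.inr m) (by simp [RMul8, RLe8, hbm]) ?_
  rintro (_ | c) hy
  · exact absurd hy hbz
  · rcases mul_eq_self_or_bot hBmul hBsq b c with h | h
    · simp only [RMul8, h] at hy
      exact absurd hy hbz
    · simpa using hmax c h

end RMul8

/-- If `A` is a `⊤`-cancellative monoid with zero `⊤` and `B` is a semigroup with zero `⊥`,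
of one of the four admissible kinds, then `A ⊔ B` with the extended multiplication and the
`M_X` order is a lattice-ordered monoid whose multiplication is order-preserving and
distributes over binary joins, and all division sets have maxima; hence it is the reduct of
a residuated lattice based on `M_X` with `X = (A ∪ B) \ {⊥, ⊤}`. -/
theorem stmt_8 {A B : Type*} [Monoid A] [Mul B] (top : A) (bot : B)
    (hAabs : ∀ a : A, top * a = top ∧ a * top = top)
    (hAcanc : ∀ x y z : A, (x * y = x * z → x * y ≠ top → y = z) ∧
      (y * x = z * x → y * x ≠ top → y = z))
    (hBassoc : ∀ x y z : B, x * y * z = x * (y * z))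
    (hBabs : ∀ b : B, bot * b = bot ∧ b * bot = bot)
    (hBcard : ∀ x y z w : B, x = y ∨ x = z ∨ x = w ∨ y = z ∨ y = w ∨ z = w)
    (hBmul : ∀ x y : B, x ≠ y → x * y = bot)
    (hBsq : ∀ b : B, b * b = b ∨ b * b = bot)
    (hBnil : ∀ b : B, b ≠ bot → b * b = bot → ∀ c : B, c = bot ∨ c = b) :
    -- RLe8 is a partial order
    (∀ x : A ⊕ B, RLe8 top bot x x) ∧
    (∀ x y : A ⊕ B, RLe8 top bot x y → RLe8 top bot y x → x = y) ∧
    (∀ x y z : A ⊕ B, RLe8 top bot x y → RLe8 top bot y z → RLe8 top bot x z) ∧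
    -- with bottom `⊥` and top `⊤`
    (∀ x : A ⊕ B, RLe8 top bot (Sum.inr bot) x ∧ RLe8 top bot x (Sum.inl top)) ∧
    -- RJoin8 is the least upper bound and RMeet8 the greatest lower bound
    (∀ x y : A ⊕ B, RLe8 top bot x (RJoin8 top bot x y) ∧ RLe8 top bot y (RJoin8 top bot x y) ∧
      ∀ z, RLe8 top bot x z → RLe8 top bot y z → RLe8 top bot (RJoin8 top bot x y) z) ∧
    (∀ x y : A ⊕ B, RLe8 top bot (RMeet8 top bot x y) x ∧ RLe8 top bot (RMeet8 top bot x y) y ∧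
      ∀ z, RLe8 top bot z x → RLe8 top bot z y → RLe8 top bot z (RMeet8 top bot x y)) ∧
    -- RMul8 is a monoid operation with identity `1 ∈ A`
    (∀ x y z : A ⊕ B, RMul8 (RMul8 x y) z = RMul8 x (RMul8 y z)) ∧
    (∀ x : A ⊕ B, RMul8 (Sum.inl (1 : A)) x = x ∧ RMul8 x (Sum.inl (1 : A)) = x) ∧
    -- multiplication is order-preserving
    (∀ x y z : A ⊕ B, RLe8 top bot y z →
      RLe8 top bot (RMul8 x y) (RMul8 x z) ∧ RLe8 top bot (RMul8 y x) (RMul8 z x)) ∧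
    -- multiplication distributes over binary joins
    (∀ x y z : A ⊕ B, RMul8 x (RJoin8 top bot y z) = RJoin8 top bot (RMul8 x y) (RMul8 x z) ∧
      RMul8 (RJoin8 top bot y z) x = RJoin8 top bot (RMul8 y x) (RMul8 z x)) ∧
    -- the division sets have maxima, so we get the reduct of a residuated lattice
    (∀ x z : A ⊕ B,
      (∃ m, RLe8 top bot (RMul8 x m) z ∧ ∀ y, RLe8 top bot (RMul8 x y) z → RLe8 top bot y m) ∧
      (∃ m, RLe8 top bot (RMul8 m x) z ∧ ∀ y, RLe8 top bot (RMul8 y x) z → RLe8 top bot y m)) := by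
  have hB : ∀ b : B, RMonotone8 top bot (RMul8 (Sum.inr b)) ∧
      RResiduated8 top bot (RMul8 (Sum.inr b)) := fun b =>
    ⟨rmonotone8_rmul8_inr hBabs hBmul hBsq b,
      rresiduated8_rmul8_inr hBabs hBcard hBmul hBsq hBnil b⟩
  have hL : ∀ x : A ⊕ B, RMonotone8 top bot (RMul8 x) ∧ RResiduated8 top bot (RMul8 x) := by
    rintro (a | b)
    · rw [rmul8_inl_eq_sumMap]
      exact ⟨rmonotone8_sumMap (hAabs a).2,
        rresiduated8_sumMap fun _ _ => (hAcanc a _ _).1⟩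
    · exact hB b
  have hR : ∀ x : A ⊕ B, RMonotone8 top bot (RMul8 · x) ∧ RResiduated8 top bot (RMul8 · x) := by
    rintro (a | b)
    · rw [rmul8_inl_right_eq_sumMap]
      exact ⟨rmonotone8_sumMap (hAabs a).1,
        rresiduated8_sumMap fun _ _ => (hAcanc a _ _).2⟩
    · rw [rmul8_inr_right_eq_left (mul_comm_of_mul_ne hBmul)]
      exact hB b
  refine ⟨fun _ => Or.inl rfl, fun _ _ => RLe8.antisymm, fun _ _ _ => RLe8.trans,
    fun _ => ⟨Or.inr (Or.inl rfl), Or.inr (Or.inr rfl)⟩,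
    fun _ _ => ⟨rle8_rjoin8_left, rle8_rjoin8_right, fun _ => rjoin8_rle8⟩,
    fun _ _ => ⟨rmeet8_rle8_left, rmeet8_rle8_right, fun _ => rle8_rmeet8⟩,
    rmul8_assoc hBassoc, fun x => ⟨one_rmul8 x, rmul8_one x⟩,
    fun x y z h => ⟨(hL x).1 y z h, (hR x).1 y z h⟩,
    fun x y z => ⟨(hL x).1.map_rjoin8 (hL x).2 y z, (hR x).1.map_rjoin8 (hR x).2 y z⟩,
    fun x z => ⟨(hL x).2 z, (hR x).2 z⟩⟩
end

section
/- If R is a residuated lattice based on M_X with ⊥ ≠ ⊤ that is integral, i.e., x ≤ 1 for all x ∈ R, then 1 = ⊤, U = ∅, X has at most 2 elements, and consequently R has at most 4 elements. -/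
/-- An integral residuated lattice based on `M_X` (with `⊥ ≠ ⊤`) satisfies `1 = ⊤`, has
`U = ∅`, `X` has at most 2 elements, and the whole algebra has at most 4 elements. -/
theorem stmt_9 {R : Type*} [Lattice R] [BoundedOrder R] [Monoid R]
    (ld rd : R → R → R)
    (hl : ∀ x y z : R, x * y ≤ z ↔ y ≤ ld x z)
    (hr : ∀ x y z : R, x * y ≤ z ↔ x ≤ rd z y)
    (hbt : (⊥ : R) ≠ ⊤)
    (hMX : ∀ x y : R, x ≠ ⊥ → x ≠ ⊤ → y ≠ ⊥ → y ≠ ⊤ → x ≠ y → x ⊔ y = ⊤ ∧ x ⊓ y = ⊥)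
    (hint : ∀ x : R, x ≤ 1) :
    (1 : R) = ⊤ ∧
    {x : R | x ≠ ⊥ ∧ x ≠ ⊤ ∧ x * ⊤ = ⊤} = ∅ ∧
    (∃ s : Finset R, s.card ≤ 2 ∧ ∀ x : R, x ≠ ⊥ → x ≠ ⊤ → x ∈ s) ∧
    (∃ t : Finset R, t.card ≤ 4 ∧ ∀ x : R, x ∈ t) := by
  classical
  have h1 : (1 : R) = ⊤ := eq_top_iff.mpr (hint ⊤)
  have hmulT : ∀ x : R, x * ⊤ = x := fun x => by rw [← h1, mul_one]
  have hTmul : ∀ x : R, ⊤ * x = x := fun x => by rw [← h1, one_mul]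
  have hmonoR : ∀ x y z : R, y ≤ z → x * y ≤ x * z := fun x y z h =>
    (hl x y (x * z)).mpr (le_trans h ((hl x z (x * z)).mp le_rfl))
  have hmonoL : ∀ x y z : R, x ≤ z → x * y ≤ z * y := fun x y z h =>
    (hr x y (z * y)).mpr (le_trans h ((hr z y (z * y)).mp le_rfl))
  -- key: no three distinct middle elements
  have key : ∀ a b c : R, a ≠ ⊥ → a ≠ ⊤ → b ≠ ⊥ → b ≠ ⊤ → c ≠ ⊥ → c ≠ ⊤ →
      a ≠ b → a ≠ c → b ≠ c → False := by
    intro a b c hab' hat hbb hbt' hcb hct hab hac hbc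
    have hmul : ∀ y : R, y ≠ ⊥ → y ≠ ⊤ → a ≠ y → a * y ≤ ⊥ := by
      intro y hyb hyt hay
      have h1' : a * y ≤ a := (hmonoR a y ⊤ le_top).trans (hmulT a).le
      have h2' : a * y ≤ y := (hmonoL a y ⊤ le_top).trans (hTmul y).le
      have := (hMX a y hab' hat hyb hyt hay).2
      exact this ▸ le_inf h1' h2'
    have hbsup : b ⊔ c = ⊤ := (hMX b c hbb hbt' hcb hct hbc).1
    have hble : b ≤ ld a ⊥ := (hl a b ⊥).mp (hmul b hbb hbt' hab)
    have hcle : c ≤ ld a ⊥ := (hl a c ⊥).mp (hmul c hcb hct hac)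
    have htle : (⊤ : R) ≤ ld a ⊥ := hbsup ▸ sup_le hble hcle
    have : a * ⊤ ≤ ⊥ := (hl a ⊤ ⊥).mpr htle
    rw [hmulT a] at this
    exact hab' (le_bot_iff.mp this)
  refine ⟨h1, ?_, ?_⟩
  · ext x
    simp only [Set.mem_setOf_eq, Set.mem_empty_iff_false, iff_false, not_and]
    intro hxb hxt hxT
    exact hxt (by rw [← hxT, hmulT])
  · -- construct the finsets
    have hs : ∃ s : Finset R, s.card ≤ 2 ∧ ∀ x : R, x ≠ ⊥ → x ≠ ⊤ → x ∈ s := by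
      by_cases h : ∃ a : R, a ≠ ⊥ ∧ a ≠ ⊤
      · obtain ⟨a, hab, hat⟩ := h
        by_cases h2 : ∃ b : R, (b ≠ ⊥ ∧ b ≠ ⊤) ∧ b ≠ a
        · obtain ⟨b, ⟨hbb, hbt'⟩, hba⟩ := h2
          refine ⟨{a, b}, ?_, ?_⟩
          · exact (Finset.card_insert_le a {b}).trans (by simp)
          · intro x hxb hxt
            by_cases hxa : x = a
            · simp [hxa]
            · by_cases hxb' : x = b
              · simp [hxb']
              · exact absurd (key a b x hab hat hbb hbt' hxb hxt
                  (Ne.symm hba) (Ne.symm hxa) (Ne.symm hxb')) id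
        · refine ⟨{a}, by simp, ?_⟩
          intro x hxb hxt
          have : x = a := by
            by_contra hxa
            exact h2 ⟨x, ⟨hxb, hxt⟩, hxa⟩
          simp [this]
      · refine ⟨∅, by simp, ?_⟩
        intro x hxb hxt
        exact absurd ⟨x, hxb, hxt⟩ h
    obtain ⟨s, hsc, hsm⟩ := hs
    refine ⟨⟨s, hsc, hsm⟩, insert ⊥ (insert ⊤ s), ?_, ?_⟩
    · calc (insert ⊥ (insert ⊤ s)).card ≤ (insert ⊤ s).card + 1 :=
            Finset.card_insert_le _ _
        _ ≤ (s.card + 1) + 1 := by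
            exact Nat.add_le_add_right (Finset.card_insert_le _ _) 1
        _ ≤ 4 := by omega
    · intro x
      by_cases hxb : x = ⊥
      · simp [hxb]
      · by_cases hxt : x = ⊤
        · simp [hxt]
        · simp [Finset.mem_insert, hsm x hxb hxt]
end

section
/- Let R be a residuated lattice with bottom ⊥ and top ⊤, ⊥ ≠ ⊤, such that distinct elements of G := R \ {⊥, ⊤} satisfy x ∨ y = ⊤ and x ∧ y = ⊥, multiplication is commutative, G is closed under multiplication and every element of G is invertible (so G is an abelian group), and ⊤·x = ⊤ for all x ≠ ⊥. Then for every finite subset B of R there exist a finite residuated lattice C with the same properties (bounded with distinct bounds, commutative, whose non-bound elements form an abelian group and are pairwise incomparable, with top absorbing on non-bottom elements) and an injective map f : B → C that preserves each of the operations ∧, ∨, ·, \ and the constant 1 whenever the arguments and the result of the operation all lie in B; that is, every finite partial subalgebra of R embeds into a finite algebra of the same kind. -/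
/-- A bounded commutative residuated lattice whose non-bound elements are pairwise
incomparable, closed under multiplication, all invertible (i.e. form an abelian group),
and whose top is absorbing on non-bottom elements. -/
class MGAlgebra (C : Type*) extends Lattice C, BoundedOrder C, Monoid C where
  ld : C → C → C
  rd : C → C → C
  resl : ∀ x y z : C, x * y ≤ z ↔ y ≤ ld x z
  resr : ∀ x y z : C, x * y ≤ z ↔ x ≤ rd z y
  bot_ne_top : (⊥ : C) ≠ ⊤
  mul_comm' : ∀ x y : C, x * y = y * x
  unilinear : ∀ x y : C, x ≠ ⊥ → x ≠ ⊤ → y ≠ ⊥ → y ≠ ⊤ → x ≠ y → x ⊔ y = ⊤ ∧ x ⊓ y = ⊥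
  mul_closed : ∀ x y : C, x ≠ ⊥ → x ≠ ⊤ → y ≠ ⊥ → y ≠ ⊤ → x * y ≠ ⊥ ∧ x * y ≠ ⊤
  invertible : ∀ x : C, x ≠ ⊥ → x ≠ ⊤ → ∃ y : C, y ≠ ⊥ ∧ y ≠ ⊤ ∧ x * y = 1
  top_absorb : ∀ x : C, x ≠ ⊥ → ⊤ * x = ⊤

/-- `f` is an embedding of the partial subalgebra induced by `B` into `C`: it is injective
on `B` and preserves each operation whenever arguments and result lie in `B`. -/
def IsPartialEmbedding {R C : Type*} [MGAlgebra R] [MGAlgebra C] (B : Set R) (f : R → C) :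
    Prop :=
  Set.InjOn f B ∧
  (∀ x ∈ B, ∀ y ∈ B, x ⊓ y ∈ B → f (x ⊓ y) = f x ⊓ f y) ∧
  (∀ x ∈ B, ∀ y ∈ B, x ⊔ y ∈ B → f (x ⊔ y) = f x ⊔ f y) ∧
  (∀ x ∈ B, ∀ y ∈ B, x * y ∈ B → f (x * y) = f x * f y) ∧
  (∀ x ∈ B, ∀ y ∈ B, MGAlgebra.ld x y ∈ B → f (MGAlgebra.ld x y) = MGAlgebra.ld (f x) (f y)) ∧
  ((1 : R) ∈ B → f 1 = 1)

/-! An algebra of this kind is determined by its group of units. If `1 = ⊤` it is the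
two-element algebra on `Bool`; otherwise it is isomorphic to `MG Rˣ`, the group `Rˣ`
flatly ordered between an adjoined bottom and an adjoined top, with `⊥` absorbing and
`⊤` absorbing all non-bottom elements. A map of groups that is injective and multiplicative
on a finite partial subgroup induces a partial embedding of the `MG` algebras, so the theorem
reduces to the finite embeddability property of abelian groups. For that, characters into
`ℚ/ℤ` separate the finitely many quotients `a / b` of the finite set, and the subgroup
generated by its image is finitely generated and torsion, hence finite. -/

section IsPartialEmbedding

variable {R C D : Type*} [MGAlgebra R] [MGAlgebra C] [MGAlgebra D]

theorem IsPartialEmbedding.mono {B B' : Set R} {f : R → C} (hf : IsPartialEmbedding B f)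
    (hB : B' ⊆ B) : IsPartialEmbedding B' f := by
  obtain ⟨hinj, hinf, hsup, hmul, hld, hone⟩ := hf
  exact ⟨hinj.mono hB,
    fun x hx y hy h => hinf x (hB hx) y (hB hy) (hB h),
    fun x hx y hy h => hsup x (hB hx) y (hB hy) (hB h),
    fun x hx y hy h => hmul x (hB hx) y (hB hy) (hB h),
    fun x hx y hy h => hld x (hB hx) y (hB hy) (hB h),
    fun h => hone (hB h)⟩

theorem IsPartialEmbedding.comp {B : Set R} {f : R → C} {g : C → D}
    (hg : IsPartialEmbedding (f '' B) g) (hf : IsPartialEmbedding B f) :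
    IsPartialEmbedding B (g ∘ f) := by
  obtain ⟨ginj, ginf, gsup, gmul, gld, gone⟩ := hg
  obtain ⟨finj, finf, fsup, fmul, fld, fone⟩ := hf
  have hmem {x} (hx : x ∈ B) : f x ∈ f '' B := Set.mem_image_of_mem f hx
  refine ⟨ginj.comp finj (Set.mapsTo_image f B), ?_, ?_, ?_, ?_, ?_⟩
  · intro x hx y hy h
    simp only [Function.comp_apply, finf x hx y hy h]
    exact ginf _ (hmem hx) _ (hmem hy) (finf x hx y hy h ▸ hmem h)
  · intro x hx y hy h
    simp only [Function.comp_apply, fsup x hx y hy h]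
    exact gsup _ (hmem hx) _ (hmem hy) (fsup x hx y hy h ▸ hmem h)
  · intro x hx y hy h
    simp only [Function.comp_apply, fmul x hx y hy h]
    exact gmul _ (hmem hx) _ (hmem hy) (fmul x hx y hy h ▸ hmem h)
  · intro x hx y hy h
    simp only [Function.comp_apply, fld x hx y hy h]
    exact gld _ (hmem hx) _ (hmem hy) (fld x hx y hy h ▸ hmem h)
  · intro h
    simp only [Function.comp_apply, fone h]
    exact gone (fone h ▸ hmem h)

theorem IsPartialEmbedding.ofBijective_symm {f : C → R} (hf : Function.Bijective f)
    (he : IsPartialEmbedding Set.univ f) :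
    IsPartialEmbedding Set.univ (Equiv.ofBijective f hf).symm := by
  set e := Equiv.ofBijective f hf
  obtain ⟨-, hinf, hsup, hmul, hld, hone⟩ := he
  refine ⟨e.symm.injective.injOn, fun x _ y _ _ => ?_, fun x _ y _ _ => ?_,
    fun x _ y _ _ => ?_, fun x _ y _ _ => ?_, fun _ => ?_⟩ <;>
    apply e.injective <;> simp [e, Equiv.ofBijective_apply_symm_apply, hinf, hsup, hmul, hld, hone]

end IsPartialEmbedding

lemma isOfFinAddOrder_addCircle_rat (x : AddCircle (1 : ℚ)) : IsOfFinAddOrder x := by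
  obtain ⟨q, rfl⟩ := QuotientAddGroup.mk_surjective x
  have h : addOrderOf (q : AddCircle (1 : ℚ)) = q.den := by
    simpa using AddCircle.addOrderOf_coe_rat (p := (1 : ℚ)) (q := q)
  rw [← addOrderOf_pos_iff, h]
  exact q.pos

namespace CommGroup

variable {G : Type*} [CommGroup G]

lemma exists_monoidHom_addCircle_ne_one {g : G} (hg : g ≠ 1) :
    ∃ χ : G →* Multiplicative (AddCircle (1 : ℚ)), χ g ≠ 1 :=
  let ⟨c, hc⟩ :=
    CharacterModule.exists_character_apply_ne_zero_of_ne_zero (a := Additive.ofMul g) hg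
  ⟨AddMonoidHom.toMultiplicativeRight c, hc⟩

open Pointwise in
lemma exists_monoidHom_pi_addCircle_injOn {S : Set G} (hS : S.Finite) :
    ∃ (n : ℕ) (ψ : G →* (Fin n → Multiplicative (AddCircle (1 : ℚ)))), Set.InjOn ψ S := by
  let D := (S / S) \ {1}
  have : Finite D := (hS.div hS).sdiff.to_subtype
  choose χ hχ using fun d : D => exists_monoidHom_addCircle_ne_one d.2.2
  let e := Finite.equivFin D
  refine ⟨_, MonoidHom.pi fun i => χ (e.symm i),
    fun a ha b hb hab => by_contra fun hne => ?_⟩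
  let d : D := ⟨a / b, Set.div_mem_div ha hb, div_ne_one.mpr hne⟩
  have := congrFun hab (e d)
  simp only [MonoidHom.pi_apply, Equiv.symm_apply_apply] at this
  exact hχ d (by rw [map_div, this, div_self'])

theorem exists_finite_partialEmbedding {S : Set G} (hS : S.Finite) :
    ∃ (H : Type) (_ : CommGroup H) (_ : Finite H) (φ : G → H),
      Set.InjOn φ S ∧ ∀ a ∈ S, ∀ b ∈ S, a * b ∈ S → φ (a * b) = φ a * φ b := by
  classical
  obtain ⟨n, ψ, hψ⟩ := exists_monoidHom_pi_addCircle_injOn hS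
  let K := Subgroup.closure (ψ '' S)
  have : Finite ↥(ψ '' S) := (hS.image ψ).to_subtype
  have htorsion : IsMulTorsion (Fin n → Multiplicative (AddCircle (1 : ℚ))) := fun x =>
    .pi fun _ =>
      (isOfFinOrder_ofAdd_iff (α := AddCircle (1 : ℚ))).mpr (isOfFinAddOrder_addCircle_rat _)
  have hK : Finite K := finite_of_fg_isMulTorsion K (htorsion.subgroup K)
  have hmem {a} (ha : a ∈ S) : ψ a ∈ K := Subgroup.subset_closure (Set.mem_image_of_mem ψ ha)
  -- `ψ` need not map into `K` off `S`; the junk value `1` there is never used.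
  let φ (g : G) : K := if h : ψ g ∈ K then ⟨ψ g, h⟩ else 1
  have hφ {a} (ha : a ∈ S) : (φ a : _) = ψ a := by simp [φ, hmem ha]
  refine ⟨K, inferInstance, hK, φ, fun a ha b hb h => hψ ha hb ?_, fun a ha b hb hab => ?_⟩
  · rw [← hφ ha, ← hφ hb, h]
  · ext; simp [hφ ha, hφ hb, hφ hab]

end CommGroup

namespace MGAlgebra

variable {R : Type*} [MGAlgebra R]

instance toCommMonoid : CommMonoid R where
  mul_comm := mul_comm'

instance : MulLeftMono R :=
  ⟨fun c _ _ h => (resl c _ _).mpr (h.trans ((resl c _ _).mp le_rfl))⟩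

@[simp] lemma mul_bot (x : R) : x * ⊥ = ⊥ := le_bot_iff.mp ((resl x ⊥ ⊥).mpr bot_le)

@[simp] lemma bot_mul (x : R) : ⊥ * x = ⊥ := by rw [mul_comm, mul_bot]

lemma mul_top {x : R} (hx : x ≠ ⊥) : x * ⊤ = ⊤ := by rw [mul_comm, top_absorb x hx]

lemma one_ne_bot : (1 : R) ≠ ⊥ := fun h => bot_ne_top (by simpa [h] using mul_one (⊤ : R))

lemma mul_ne_bot {x y : R} (hx : x ≠ ⊥) (hy : y ≠ ⊥) : x * y ≠ ⊥ := by
  by_cases hxt : x = ⊤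
  · rw [hxt, top_absorb y hy]; exact bot_ne_top.symm
  by_cases hyt : y = ⊤
  · rw [hyt, mul_top hx]; exact bot_ne_top.symm
  exact (mul_closed x y hx hxt hy hyt).1

lemma mul_ld_le (x z : R) : x * ld x z ≤ z := (resl x _ z).mpr le_rfl

lemma ld_bot_left (z : R) : ld ⊥ z = ⊤ := top_unique ((resl ⊥ ⊤ z).mp (by simp))

lemma ld_top_right (x : R) : ld x ⊤ = ⊤ := top_unique ((resl x ⊤ ⊤).mp le_top)

lemma ld_bot_right {x : R} (hx : x ≠ ⊥) : ld x ⊥ = ⊥ := by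
  by_contra h
  exact mul_ne_bot hx h (le_bot_iff.mp (mul_ld_le x ⊥))

lemma ld_top_left {z : R} (hz : z ≠ ⊤) : ld ⊤ z = ⊥ := by
  by_contra h
  have := mul_ld_le ⊤ z
  rw [top_absorb _ h] at this
  exact hz (top_unique this)

lemma ld_units (u : Rˣ) (z : R) : ld ↑u z = ↑u⁻¹ * z := by
  refine le_antisymm ?_ ((resl _ _ _).mp (by rw [Units.mul_inv_cancel_left]))
  calc ld ↑u z = ↑u⁻¹ * (↑u * ld ↑u z) := by rw [Units.inv_mul_cancel_left]
    _ ≤ ↑u⁻¹ * z := mul_le_mul_right (mul_ld_le _ _) _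

lemma Units.ne_bot (u : Rˣ) : (u : R) ≠ ⊥ := fun h =>
  one_ne_bot (by rw [← u.mul_inv, h, bot_mul])

lemma Units.ne_top (h1 : (1 : R) ≠ ⊤) (u : Rˣ) : (u : R) ≠ ⊤ := fun h =>
  h1 (by rw [← u.mul_inv, h, top_absorb _ (Units.ne_bot u⁻¹)])

lemma isUnit_of_ne_bot_of_ne_top {x : R} (hb : x ≠ ⊥) (ht : x ≠ ⊤) : IsUnit x :=
  let ⟨_, _, _, hxy⟩ := invertible x hb ht
  IsUnit.of_mul_eq_one _ hxy

lemma eq_bot_or_eq_top_of_one_eq_top (h1 : (1 : R) = ⊤) (x : R) : x = ⊥ ∨ x = ⊤ :=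
  or_iff_not_imp_left.mpr fun hx => by rw [← one_mul x, h1, top_absorb x hx]

end MGAlgebra

noncomputable instance Bool.instMGAlgebra : MGAlgebra Bool where
  toLattice := inferInstance
  toBoundedOrder := inferInstance
  mul := and
  one := true
  mul_assoc := by decide
  one_mul := by decide
  mul_one := by decide
  ld x z := !x || z
  rd z y := !y || z
  resl := by decide
  resr := by decide
  bot_ne_top := by decide
  mul_comm' := by decide
  unilinear := by decide
  mul_closed := by decide
  invertible := by decide
  top_absorb := by decide

inductive MG (H : Type*)
  | bot : MG H
  | top : MG H
  | of (a : H) : MG H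

namespace MG

variable {G H : Type*}

instance [Finite H] : Finite (MG H) :=
  Finite.of_surjective (fun o : Option (Option H) => o.elim bot fun a => a.elim top of)
    (by rintro (_ | _ | a); exacts [⟨none, rfl⟩, ⟨some none, rfl⟩, ⟨some (some a), rfl⟩])

def le : MG H → MG H → Prop
  | bot, _ => True
  | _, top => True
  | of a, of b => a = b
  | _, _ => False

open Classical in
noncomputable def sup : MG H → MG H → MG H
  | bot, x => x
  | x, bot => x
  | top, _ => top
  | _, top => top
  | of a, of b => if a = b then of a else top

open Classical in
noncomputable def inf : MG H → MG H → MG H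
  | top, x => x
  | x, top => x
  | bot, _ => bot
  | _, bot => bot
  | of a, of b => if a = b then of a else bot

noncomputable instance : Lattice (MG H) where
  le := le
  le_refl x := by cases x <;> trivial
  le_trans x y z := by cases x <;> cases y <;> cases z <;> simp_all [le]
  le_antisymm x y := by cases x <;> cases y <;> simp_all [le]
  sup := sup
  le_sup_left x y := by
    cases x <;> cases y <;> simp only [sup] <;> (try split_ifs) <;> simp_all [le]
  le_sup_right x y := by
    cases x <;> cases y <;> simp only [sup] <;> (try split_ifs) <;> simp_all [le]
  sup_le x y z hx hy := by
    cases x <;> cases y <;> cases z <;> simp only [sup] <;> (try split_ifs) <;> simp_all [le]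
  inf := inf
  inf_le_left x y := by
    cases x <;> cases y <;> simp only [inf] <;> (try split_ifs) <;> simp_all [le]
  inf_le_right x y := by
    cases x <;> cases y <;> simp only [inf] <;> (try split_ifs) <;> simp_all [le]
  le_inf x y z hy hz := by
    cases x <;> cases y <;> cases z <;> simp only [inf] <;> (try split_ifs) <;> simp_all [le]

instance : BoundedOrder (MG H) where
  bot := bot
  top := top
  bot_le x := by cases x <;> trivial
  le_top x := by cases x <;> trivial

lemma le_def (x y : MG H) : x ≤ y ↔ MG.le x y := Iff.rfl
lemma sup_def (x y : MG H) : x ⊔ y = sup x y := rfl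
lemma inf_def (x y : MG H) : x ⊓ y = inf x y := rfl
@[simp] lemma bot_eq : (⊥ : MG H) = bot := rfl
@[simp] lemma top_eq : (⊤ : MG H) = top := rfl

def map (φ : G → H) : MG G → MG H
  | bot => bot
  | top => top
  | of a => of (φ a)

section Monoid

variable [Monoid H]

def mul : MG H → MG H → MG H
  | bot, _ => bot
  | _, bot => bot
  | top, _ => top
  | _, top => top
  | of a, of b => of (a * b)

instance : Monoid (MG H) where
  mul := mul
  one := of 1
  mul_assoc x y z := show mul (mul x y) z = mul x (mul y z) by
    cases x <;> cases y <;> cases z <;> simp [mul, mul_assoc]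
  one_mul x := show mul (of 1) x = x by cases x <;> simp [mul]
  mul_one x := show mul x (of 1) = x by cases x <;> simp [mul]

lemma mul_def (x y : MG H) : x * y = mul x y := rfl
@[simp] lemma one_eq : (1 : MG H) = of 1 := rfl

end Monoid

variable [CommGroup G] [CommGroup H]

def ld : MG H → MG H → MG H
  | bot, _ => top
  | _, top => top
  | top, _ => bot
  | of _, bot => bot
  | of a, of b => of (a⁻¹ * b)

lemma mul_comm (x y : MG H) : x * y = y * x := by
  cases x <;> cases y <;> simp [mul_def, mul, _root_.mul_comm]

noncomputable instance : MGAlgebra (MG H) where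
  ld := ld
  rd z y := ld y z
  resl x y z := by
    cases x <;> cases y <;> cases z <;> simp [le_def, mul_def, mul, ld, le, eq_inv_mul_iff_mul_eq]
  resr x y z := by
    rw [mul_comm]
    cases x <;> cases y <;> cases z <;> simp [le_def, mul_def, mul, ld, le, eq_inv_mul_iff_mul_eq]
  bot_ne_top := by simp
  mul_comm' := mul_comm
  unilinear x y := by cases x <;> cases y <;> simp [sup_def, inf_def, sup, inf]
  mul_closed x y := by cases x <;> cases y <;> simp [mul_def, mul]
  invertible
    | bot => by simp
    | top => by simp
    | of a => fun _ _ => ⟨of a⁻¹, by simp, by simp, by simp [mul_def, mul]⟩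
  top_absorb x := by cases x <;> simp [mul_def, mul]

lemma ld_def (x y : MG H) : MGAlgebra.ld x y = ld x y := rfl

theorem isPartialEmbedding_map {T : Set (MG G)} {φ : G → H} (hinj : Set.InjOn φ (of ⁻¹' T))
    (hmul : ∀ a ∈ of ⁻¹' T, ∀ b ∈ of ⁻¹' T, a * b ∈ of ⁻¹' T → φ (a * b) = φ a * φ b) :
    IsPartialEmbedding T (map φ) := by
  have hinj' {a b : G} (ha : of a ∈ T) (hb : of b ∈ T) : φ a = φ b ↔ a = b :=
    ⟨fun h => hinj ha hb h, congrArg φ⟩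
  refine ⟨?_, ?_, ?_, ?_, ?_, ?_⟩
  · rintro (_ | _ | a) ha (_ | _ | b) hb h <;> simp_all [map]
  · rintro (_ | _ | a) ha (_ | _ | b) hb - <;> simp_all [inf_def, inf, map]
    rw [hinj' ha hb]; split_ifs <;> rfl
  · rintro (_ | _ | a) ha (_ | _ | b) hb - <;> simp_all [sup_def, sup, map]
    rw [hinj' ha hb]; split_ifs <;> rfl
  · rintro (_ | _ | a) ha (_ | _ | b) hb hab <;> simp [mul_def, mul, map]
    exact hmul a ha b hb hab
  · rintro (_ | _ | a) ha (_ | _ | b) hb hab <;> simp [ld_def, ld, map]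
    have := hmul a ha (a⁻¹ * b) hab (by simpa using hb)
    rw [eq_inv_mul_iff_mul_eq, ← this, mul_inv_cancel_left]
  · intro h1
    simpa [map] using hmul 1 h1 1 h1 (by simpa using h1)

end MG

namespace MGAlgebra

variable {R : Type*} [MGAlgebra R]

def ofBool (b : Bool) : R := bif b then ⊤ else ⊥

lemma ofBool_bijective (h1 : (1 : R) = ⊤) : Function.Bijective (ofBool (R := R)) := by
  refine ⟨fun a b h => ?_, fun x => ?_⟩
  · cases a <;> cases b <;> simp_all [ofBool, bot_ne_top, bot_ne_top.symm]
  · rcases eq_bot_or_eq_top_of_one_eq_top h1 x with rfl | rfl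
    exacts [⟨false, rfl⟩, ⟨true, rfl⟩]

lemma isPartialEmbedding_ofBool (h1 : (1 : R) = ⊤) :
    IsPartialEmbedding Set.univ (ofBool (R := R)) := by
  have htop : (⊤ : R) * ⊤ = ⊤ := top_absorb _ bot_ne_top.symm
  refine ⟨(ofBool_bijective h1).1.injOn, ?_, ?_, ?_, ?_, fun _ => h1.symm⟩ <;>
    intro a _ b _ _ <;> cases a <;> cases b <;>
    simp [ofBool, htop, ld_bot_left, ld_top_right, ld_bot_right bot_ne_top.symm] <;> rfl

def ofMG : MG Rˣ → R
  | .bot => ⊥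
  | .top => ⊤
  | .of u => u

lemma ofMG_bijective (h1 : (1 : R) ≠ ⊤) : Function.Bijective (ofMG (R := R)) := by
  refine ⟨?_, fun x => ?_⟩
  · rintro (_ | _ | u) (_ | _ | v) h <;>
      simp_all [ofMG, bot_ne_top, bot_ne_top.symm, Units.ne_bot, Units.ne_top h1, Units.ext_iff,
        fun u : Rˣ => (Units.ne_bot u).symm, fun u : Rˣ => (Units.ne_top h1 u).symm]
  · by_cases hb : x = ⊥
    · exact ⟨.bot, hb.symm⟩
    by_cases ht : x = ⊤
    · exact ⟨.top, ht.symm⟩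
    exact ⟨.of (isUnit_of_ne_bot_of_ne_top hb ht).unit, rfl⟩

lemma isPartialEmbedding_ofMG (h1 : (1 : R) ≠ ⊤) :
    IsPartialEmbedding Set.univ (ofMG (R := R)) := by
  have hunits {u v : Rˣ} (h : u ≠ v) : (u : R) ⊔ v = ⊤ ∧ (u : R) ⊓ v = ⊥ :=
    unilinear _ _ (Units.ne_bot u) (Units.ne_top h1 u) (Units.ne_bot v) (Units.ne_top h1 v)
      (Units.val_injective.ne h)
  refine ⟨(ofMG_bijective h1).1.injOn, ?_, ?_, ?_, ?_, fun _ => Units.val_one⟩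
  · rintro (_ | _ | u) - (_ | _ | v) - - <;> simp [MG.inf_def, MG.inf, ofMG]
    split_ifs with h
    exacts [by rw [h, inf_idem], (hunits h).2.symm]
  · rintro (_ | _ | u) - (_ | _ | v) - - <;> simp [MG.sup_def, MG.sup, ofMG]
    split_ifs with h
    exacts [by rw [h, sup_idem], (hunits h).1.symm]
  · rintro (_ | _ | u) - (_ | _ | v) - - <;>
      simp [MG.mul_def, MG.mul, ofMG, top_absorb, mul_top, Units.ne_bot, bot_ne_top.symm]
  · rintro (_ | _ | u) - (_ | _ | v) - - <;>
      simp [MG.ld_def, MG.ld, ofMG, ld_bot_left, ld_top_right, ld_bot_right, ld_top_left,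
        ld_units, Units.ne_bot, Units.ne_top h1, bot_ne_top.symm]

end MGAlgebra

open MGAlgebra in
/-- The finite embeddability property for algebras of the above kind: every finite partial
subalgebra embeds into a finite algebra of the same kind. -/
theorem stmt_13 {R : Type*} [MGAlgebra R] (B : Set R) (hB : B.Finite) :
    ∃ (C : Type) (instC : MGAlgebra C) (f : R → C),
      Finite C ∧ @IsPartialEmbedding R C _ instC B f := by
  by_cases h1 : (1 : R) = ⊤
  · exact ⟨Bool, inferInstance, _, inferInstance,
      ((isPartialEmbedding_ofBool h1).ofBijective_symm (ofBool_bijective h1)).mono B.subset_univ⟩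
  let g := (Equiv.ofBijective _ (ofMG_bijective h1)).symm
  have hg : IsPartialEmbedding B g :=
    ((isPartialEmbedding_ofMG h1).ofBijective_symm _).mono B.subset_univ
  obtain ⟨H, _, _, φ, hinj, hmul⟩ := CommGroup.exists_finite_partialEmbedding
    ((hB.image g).preimage (fun _ _ _ _ => MG.of.inj))
  exact ⟨MG H, inferInstance, MG.map φ ∘ g, inferInstance,
    (MG.isPartialEmbedding_map hinj hmul).comp hg⟩
end

section
/- Let R be a residuated lattice with bounds ⊥ ≠ ⊤ that is not totally ordered, is unilinear (any two incomparable elements of R have join ⊤ and meet ⊥), and is ⊤-unital: x·⊤ = ⊤ = ⊤·x for all x ≠ ⊥. Then R \ {⊥, ⊤} is closed under multiplication if and only if for all x, y, z ∈ R with x ≠ ⊤ one has x·(y ∧ z) = x·y ∧ x·z. -/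
/-- In a non-linear, ⊤-unital, unilinear bounded residuated lattice, the set of non-bound
elements is closed under multiplication iff multiplication by any `x ≠ ⊤` distributes over
binary meets. -/
theorem stmt_14 {R : Type*} [Lattice R] [BoundedOrder R] [Monoid R]
    (ld rd : R → R → R)
    (hl : ∀ x y z : R, x * y ≤ z ↔ y ≤ ld x z)
    (hr : ∀ x y z : R, x * y ≤ z ↔ x ≤ rd z y)
    (hbt : (⊥ : R) ≠ ⊤)
    (hnl : ∃ x y : R, ¬ x ≤ y ∧ ¬ y ≤ x)
    (huni : ∀ x y : R, ¬ x ≤ y → ¬ y ≤ x → x ⊔ y = ⊤ ∧ x ⊓ y = ⊥)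
    (htu : ∀ x : R, x ≠ ⊥ → x * ⊤ = ⊤ ∧ ⊤ * x = ⊤) :
    (∀ x y : R, x ≠ ⊥ → x ≠ ⊤ → y ≠ ⊥ → y ≠ ⊤ → x * y ≠ ⊥ ∧ x * y ≠ ⊤) ↔
      (∀ x y z : R, x ≠ ⊤ → x * (y ⊓ z) = x * y ⊓ x * z) := by
  have mono_l : ∀ a b c : R, a ≤ b → a * c ≤ b * c := fun a b c h =>
    (hr a c (b*c)).mpr (le_trans h ((hr b c (b*c)).mp le_rfl))
  have mono_r : ∀ a b c : R, b ≤ c → a * b ≤ a * c := fun a b c h =>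
    (hl a b (a*c)).mpr (le_trans h ((hl a c (a*c)).mp le_rfl))
  have mul_bot : ∀ a : R, a * ⊥ = ⊥ := fun a =>
    le_bot_iff.mp ((hl a ⊥ ⊥).mpr bot_le)
  have bot_mul : ∀ a : R, ⊥ * a = ⊥ := fun a =>
    le_bot_iff.mp ((hr ⊥ a ⊥).mpr bot_le)
  have mul_sup : ∀ a b c : R, a * (b ⊔ c) = a * b ⊔ a * c := by
    intro a b c
    apply le_antisymm
    · exact (hl a _ _).mpr (sup_le ((hl a b _).mp le_sup_left) ((hl a c _).mp le_sup_right))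
    · exact sup_le (mono_r _ _ _ le_sup_left) (mono_r _ _ _ le_sup_right)
  -- every non-bound element has an incomparable companion
  have exinc : ∀ y : R, y ≠ ⊥ → y ≠ ⊤ → ∃ w : R, ¬ y ≤ w ∧ ¬ w ≤ y := by
    intro y hyb hyt
    obtain ⟨a, b, hab, hba⟩ := hnl
    by_cases h1 : y ≤ a
    · by_cases h2 : y ≤ b
      · exact absurd (le_bot_iff.mp ((le_inf h1 h2).trans (huni a b hab hba).2.le)) hyb
      · by_cases h3 : b ≤ y
        · exact absurd (h3.trans h1) hba
        · exact ⟨b, h2, h3⟩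
    · by_cases h4 : a ≤ y
      · by_cases h2 : y ≤ b
        · exact absurd (h4.trans h2) hab
        · by_cases h3 : b ≤ y
          · exact absurd (top_le_iff.mp ((huni a b hab hba).1 ▸ sup_le h4 h3)) hyt
          · exact ⟨b, h2, h3⟩
      · exact ⟨a, h1, h4⟩
  constructor
  · -- closure ⇒ distributivity
    intro hcl x y z hxt
    by_cases hxb : x = ⊥
    · subst hxb; simp [bot_mul]
    apply le_antisymm
    · exact le_inf (mono_r _ _ _ inf_le_left) (mono_r _ _ _ inf_le_right)
    by_cases hyz : y ≤ z
    · rw [inf_eq_left.mpr hyz]; exact inf_le_left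
    by_cases hzy : z ≤ y
    · rw [inf_eq_right.mpr hzy]; exact inf_le_right
    · obtain ⟨hsup, hinf⟩ := huni y z hyz hzy
      rw [hinf, mul_bot]
      have hy1 : y ≠ ⊥ := fun h => hyz (by rw [h]; exact bot_le)
      have hy2 : y ≠ ⊤ := fun h => hzy (by rw [h]; exact le_top)
      have hz1 : z ≠ ⊥ := fun h => hzy (by rw [h]; exact bot_le)
      have hz2 : z ≠ ⊤ := fun h => hyz (by rw [h]; exact le_top)
      have h1 := (hcl x y hxb hxt hy1 hy2).2
      have h2 := (hcl x z hxb hxt hz1 hz2).2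
      by_cases hc : x * y ≤ x * z
      · exfalso
        apply h2
        apply top_le_iff.mp
        have hle : x * ⊤ ≤ x * z := (hl x ⊤ (x*z)).mpr
          (by rw [← hsup]; exact sup_le ((hl x y _).mp hc) ((hl x z _).mp le_rfl))
        rwa [(htu x hxb).1] at hle
      by_cases hc' : x * z ≤ x * y
      · exfalso
        apply h1
        apply top_le_iff.mp
        have hle : x * ⊤ ≤ x * y := (hl x ⊤ (x*y)).mpr
          (by rw [← hsup]; exact sup_le ((hl x y _).mp le_rfl) ((hl x z _).mp hc'))
        rwa [(htu x hxb).1] at hle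
      · exact (huni _ _ hc hc').2.le
  · -- distributivity ⇒ closure
    intro hd x y hxb hxt hyb hyt
    have key : ∀ a b c : R, a ≠ ⊥ → a ≠ ⊤ → ¬ b ≤ c → ¬ c ≤ b →
        a * b = ⊤ → a * c = ⊥ → False := by
      intro a b c hab hat hbc hcb hT hB
      have hcbot : c ≠ ⊥ := fun h => hcb (by rw [h]; exact bot_le)
      have hbtop : b ≠ ⊤ := fun h => hcb (by rw [h]; exact le_top)
      set s := rd ⊥ c with hs
      have hsz : s * c = ⊥ := le_bot_iff.mp ((hr s c ⊥).mpr le_rfl)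
      have hxs : a ≤ s := (hr a c ⊥).mp hB.le
      have hsb : s ≠ ⊥ := fun h => hab (le_bot_iff.mp (h ▸ hxs))
      have hst : s ≠ ⊤ := fun h => hbt (by rw [h, (htu c hcbot).2] at hsz; exact hsz.symm)
      have hsy : s * b = ⊤ := top_le_iff.mp (hT ▸ mono_l a s b hxs)
      have h1s : ¬ (1:R) ≤ s := by
        intro h
        apply hcbot
        apply le_bot_iff.mp
        calc c = 1 * c := (one_mul c).symm
          _ ≤ s * c := mono_l _ _ _ h
          _ = ⊥ := hsz
      have hs1 : ¬ s ≤ (1:R) := by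
        intro h
        apply hbtop
        apply top_le_iff.mp
        calc ⊤ = s * b := hsy.symm
          _ ≤ 1 * b := mono_l _ _ _ h
          _ = b := one_mul b
      have hinf : s ⊓ 1 = ⊥ := (huni s 1 hs1 h1s).2
      have hd1 : s * (s ⊓ 1) = s * s ⊓ s * 1 := hd s s 1 hst
      rw [hinf, mul_bot, mul_one] at hd1
      have hss : s * s ≤ s := (hr (s*s) c ⊥).mp
        (le_of_eq (by rw [mul_assoc, hsz, mul_bot]))
      have hssb : s * s = ⊥ := by rw [← inf_eq_left.mpr hss]; exact hd1.symm
      apply hbt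
      calc (⊥:R) = ⊥ * b := (bot_mul b).symm
        _ = (s * s) * b := by rw [hssb]
        _ = s * (s * b) := mul_assoc s s b
        _ = s * ⊤ := by rw [hsy]
        _ = ⊤ := (htu s hsb).1
    constructor
    · intro hB
      obtain ⟨w, hyw, hwy⟩ := exinc y hyb hyt
      have hsup : y ⊔ w = ⊤ := (huni y w hyw hwy).1
      have hT : x * w = ⊤ := by
        have h := mul_sup x y w
        rw [hsup, (htu x hxb).1, hB, bot_sup_eq] at h
        exact h.symm
      exact key x w y hxb hxt hwy hyw hT hB
    · intro hT
      obtain ⟨w, hyw, hwy⟩ := exinc y hyb hyt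
      have hinf : y ⊓ w = ⊥ := (huni y w hyw hwy).2
      have hB : x * w = ⊥ := by
        have h := hd x y w hxt
        rw [hinf, mul_bot, hT, top_inf_eq] at h
        exact h.symm
      exact key x y w hxb hxt hyw hwy hT hB
end

section
/- Let R be a compact unilinear residuated lattice that is not a chain, with bounds ⊥ ≠ ⊤, and set M := R \ {⊥, ⊤}. Then the comparability relation ≡ on M (x ≡ y iff x ≤ y or y ≤ x) is an equivalence relation on M that is a congruence of the monoid M (x ≡ x' and y ≡ y' imply x·y ≡ x'·y'); the quotient monoid M/≡ is cancellative — equivalently, for x, y, z ∈ M, if y and z are incomparable then x·y and x·z are incomparable and y·x and z·x are incomparable; and {x ∈ M : x ≡ 1} is a totally ordered submonoid of M. -/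
/-- In a non-linear compact unilinear residuated lattice, the comparability relation on
`M = R \ {⊥,⊤}` is a monoid congruence whose quotient is cancellative, and the chain of `1`
is a totally ordered submonoid. -/
theorem stmt_15 {R : Type*} [Lattice R] [BoundedOrder R] [Monoid R]
    (ld rd : R → R → R)
    (hl : ∀ x y z : R, x * y ≤ z ↔ y ≤ ld x z)
    (hr : ∀ x y z : R, x * y ≤ z ↔ x ≤ rd z y)
    (hbt : (⊥ : R) ≠ ⊤)
    (hnl : ∃ x y : R, ¬ x ≤ y ∧ ¬ y ≤ x)
    (huni : ∀ x y : R, ¬ x ≤ y → ¬ y ≤ x → x ⊔ y = ⊤ ∧ x ⊓ y = ⊥)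
    (htu : ∀ x : R, x ≠ ⊥ → x * ⊤ = ⊤ ∧ ⊤ * x = ⊤)
    (hMcl : ∀ x y : R, (x ≠ ⊥ ∧ x ≠ ⊤) → (y ≠ ⊥ ∧ y ≠ ⊤) → (x * y ≠ ⊥ ∧ x * y ≠ ⊤)) :
    let inM : R → Prop := fun x => x ≠ ⊥ ∧ x ≠ ⊤
    let cmp : R → R → Prop := fun x y => x ≤ y ∨ y ≤ x
    -- ≡ is an equivalence relation on M (reflexivity and symmetry are clear; transitivity:)
    (∀ x y z : R, inM x → inM y → inM z → cmp x y → cmp y z → cmp x z) ∧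
    -- ≡ is a congruence of the monoid M
    (∀ x x' y y' : R, inM x → inM x' → inM y → inM y' →
      cmp x x' → cmp y y' → cmp (x * y) (x' * y')) ∧
    -- the quotient monoid M/≡ is cancellative
    (∀ x y z : R, inM x → inM y → inM z → ¬ cmp y z →
      ¬ cmp (x * y) (x * z) ∧ ¬ cmp (y * x) (z * x)) ∧
    -- the class of 1 is a totally ordered submonoid of M
    ((1 : R) ≠ ⊥ ∧ (1 : R) ≠ ⊤) ∧
    (∀ x y : R, (inM x ∧ cmp x 1) → (inM y ∧ cmp y 1) → (inM (x * y) ∧ cmp (x * y) 1)) ∧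
    (∀ x y : R, (inM x ∧ cmp x 1) → (inM y ∧ cmp y 1) → cmp x y) := by
  intro inM cmp
  -- monotonicity of multiplication
  have monoL : ∀ x y y' : R, y ≤ y' → x * y ≤ x * y' := fun x y y' h =>
    (hl x y (x * y')).mpr (le_trans h ((hl x y' (x * y')).mp le_rfl))
  have monoR : ∀ x x' y : R, x ≤ x' → x * y ≤ x' * y := fun x x' y h =>
    (hr x y (x' * y)).mpr (le_trans h ((hr x' y (x' * y)).mp le_rfl))
  -- sub-distributivity over joins
  have distL : ∀ x y z : R, x * (y ⊔ z) ≤ x * y ⊔ x * z := fun x y z =>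
    (hl x _ _).mpr (sup_le ((hl x y _).mp le_sup_left) ((hl x z _).mp le_sup_right))
  have distR : ∀ x y z : R, (y ⊔ z) * x ≤ y * x ⊔ z * x := fun x y z =>
    (hr _ x _).mpr (sup_le ((hr y x _).mp le_sup_left) ((hr z x _).mp le_sup_right))
  -- transitivity of cmp on M
  have htrans : ∀ x y z : R, inM x → inM y → inM z → cmp x y → cmp y z → cmp x z := by
    intro x y z hx hy hz hxy hyz
    by_contra h
    obtain ⟨h1, h2⟩ := not_or.mp h
    obtain ⟨htop, hbot⟩ := huni x z h1 h2
    rcases hxy with hxy | hxy <;> rcases hyz with hyz | hyz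
    · exact h1 (le_trans hxy hyz)
    · exact hy.2 (top_unique (htop ▸ (sup_le hxy hyz : x ⊔ z ≤ y)))
    · exact hy.1 (le_bot_iff.mp (hbot ▸ (le_inf hxy hyz : y ≤ x ⊓ z)))
    · exact h2 (le_trans hyz hxy)
  -- cancellativity
  have hcanc : ∀ x y z : R, inM x → inM y → inM z → ¬ cmp y z →
      ¬ cmp (x * y) (x * z) ∧ ¬ cmp (y * x) (z * x) := by
    intro x y z hx hy hz hnc
    obtain ⟨h1, h2⟩ := not_or.mp hnc
    obtain ⟨hsup, _⟩ := huni y z h1 h2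
    constructor
    · intro hc
      have htopLe : (⊤ : R) ≤ x * y ⊔ x * z := by
        have h := distL x y z
        rwa [hsup, (htu x hx.1).1] at h
      rcases hc with hc | hc
      · exact (hMcl x z hx hz).2 (top_unique (le_trans htopLe (sup_le hc le_rfl)))
      · exact (hMcl x y hx hy).2 (top_unique (le_trans htopLe (sup_le le_rfl hc)))
    · intro hc
      have htopLe : (⊤ : R) ≤ y * x ⊔ z * x := by
        have h := distR x y z
        rwa [hsup, (htu x hx.1).2] at h
      rcases hc with hc | hc
      · exact (hMcl z x hz hx).2 (top_unique (le_trans htopLe (sup_le hc le_rfl)))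
      · exact (hMcl y x hy hx).2 (top_unique (le_trans htopLe (sup_le le_rfl hc)))
  -- congruence
  have hcong : ∀ x x' y y' : R, inM x → inM x' → inM y → inM y' →
      cmp x x' → cmp y y' → cmp (x * y) (x' * y') := by
    intro x x' y y' hx hx' hy hy' hxx hyy
    rcases hxx with hxx | hxx <;> rcases hyy with hyy | hyy
    · exact Or.inl (le_trans (monoL x y y' hyy) (monoR x x' y' hxx))
    · exact htrans (x * y) (x * y') (x' * y') (hMcl x y hx hy) (hMcl x y' hx hy')
        (hMcl x' y' hx' hy') (Or.inr (monoL x y' y hyy)) (Or.inl (monoR x x' y' hxx))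
    · exact htrans (x * y) (x' * y) (x' * y') (hMcl x y hx hy) (hMcl x' y hx' hy)
        (hMcl x' y' hx' hy') (Or.inr (monoR x' x y hxx)) (Or.inl (monoL x' y y' hyy))
    · exact Or.inr (le_trans (monoL x' y' y hyy) (monoR x' x y hxx))
  have mulBot : ∀ x : R, x * ⊥ = ⊥ := fun x =>
    le_antisymm ((hl x ⊥ ⊥).mpr bot_le) bot_le
  have h1b : (1 : R) ≠ ⊥ := by
    intro h
    exact hbt (by rw [← mulBot ⊤, ← h, mul_one])
  have h1t : (1 : R) ≠ ⊤ := by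
    intro h
    obtain ⟨a, b, hab, hba⟩ := hnl
    have ha : a ≠ ⊥ := fun h' => hab (h' ▸ bot_le)
    have : a = ⊤ := by rw [← mul_one a, h, (htu a ha).1]
    exact hba (this ▸ le_top)
  have h1M : inM (1 : R) := ⟨h1b, h1t⟩
  refine ⟨htrans, hcong, hcanc, h1M, ?_, ?_⟩
  · intro x y ⟨hx, hx1⟩ ⟨hy, hy1⟩
    refine ⟨hMcl x y hx hy, ?_⟩
    rcases hx1 with hx1 | hx1 <;> rcases hy1 with hy1 | hy1
    · exact Or.inl (le_trans (monoL x y 1 hy1) (by rw [mul_one]; exact hx1))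
    · refine htrans (x * y) x 1 (hMcl x y hx hy) hx h1M ?_ (Or.inl hx1)
      exact Or.inr (by calc x = x * 1 := (mul_one x).symm
                         _ ≤ x * y := monoL x 1 y hy1)
    · refine htrans (x * y) x 1 (hMcl x y hx hy) hx h1M ?_ (Or.inr hx1)
      exact Or.inl (by calc x * y ≤ x * 1 := monoL x y 1 hy1
                         _ = x := mul_one x)
    · exact Or.inr (by calc (1 : R) = 1 * 1 := (one_mul 1).symm
                         _ ≤ x * y := le_trans (monoR 1 x 1 hx1) (monoL x 1 y hy1))
  · intro x y ⟨hx, hx1⟩ ⟨hy, hy1⟩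
    exact htrans x 1 y hx h1M hy hx1 (Or.symm hy1)
end

section
/- Let r, s be natural numbers with s ≥ 1 and let M be the finite cyclic monoid of index r and period s: M = {1, a, a², …, a^{r+s−1}} with multiplication a^i·a^j = a^{[i+j]}, where [n] = n for n < r+s and [n] = r + ((n−r) mod s) for n ≥ r+s. Let R = M ∪ {⊥, ⊤} with multiplication extended so that ⊥ is absorbing on R and ⊤ is absorbing on R \ {⊥}, and ordered by: ⊥ is the bottom, ⊤ is the top, and for 0 ≤ i, j ≤ r+s−1, a^i ≤ a^j iff j = i + n·s for some natural number n. Then R is a lattice in which multiplication is order-preserving and distributes over binary joins; hence R is the reduct of a residuated lattice (a compact unilinear residuated lattice). -/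
/-- The normal form of an exponent in the cyclic monoid of index `r` and period `s`. -/
def cycIdx (r s n : ℕ) : ℕ := if n < r + s then n else r + (n - r) % s

/-- Multiplication `a^i · a^j = a^{[i+j]}` in the finite cyclic monoid of index `r` and
period `s`, realized on `Fin (r+s)`. -/
def cycMul (r s : ℕ) (hs : 1 ≤ s) (i j : Fin (r + s)) : Fin (r + s) :=
  ⟨cycIdx r s (i.val + j.val), by
    unfold cycIdx
    split
    · omega
    · have h : (i.val + j.val - r) % s < s := Nat.mod_lt _ hs
      omega⟩

/-- Multiplication on `R = M ∪ {⊥, ⊤}`: `⊥ = Sum.inr false` is absorbing on `R` and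
`⊤ = Sum.inr true` is absorbing on `R \ {⊥}`. -/
def cycRMul (r s : ℕ) (hs : 1 ≤ s) :
    (Fin (r + s) ⊕ Bool) → (Fin (r + s) ⊕ Bool) → (Fin (r + s) ⊕ Bool)
  | Sum.inr false, _ => Sum.inr false
  | _, Sum.inr false => Sum.inr false
  | Sum.inr true, _ => Sum.inr true
  | _, Sum.inr true => Sum.inr true
  | Sum.inl i, Sum.inl j => Sum.inl (cycMul r s hs i j)

/-- The order on `R = M ∪ {⊥, ⊤}`: `⊥` is the bottom, `⊤` is the top, and
`a^i ≤ a^j` iff `j = i + n·s` for some natural number `n`. -/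
def cycLe (r s : ℕ) : (Fin (r + s) ⊕ Bool) → (Fin (r + s) ⊕ Bool) → Prop
  | Sum.inr false, _ => True
  | _, Sum.inr true => True
  | Sum.inl i, Sum.inl j => ∃ n : ℕ, j.val = i.val + n * s
  | _, _ => False

open scoped Classical in
/-- The join operation for the order `cycLe`. -/
noncomputable def cycJoin (r s : ℕ) (x y : Fin (r + s) ⊕ Bool) : Fin (r + s) ⊕ Bool :=
  if cycLe r s x y then y else if cycLe r s y x then x else Sum.inr true

open scoped Classical in
/-- The meet operation for the order `cycLe`. -/
noncomputable def cycMeet (r s : ℕ) (x y : Fin (r + s) ⊕ Bool) : Fin (r + s) ⊕ Bool :=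
  if cycLe r s x y then x else if cycLe r s y x then y else Sum.inr false

/-!
Write `≼` for the order. Between elements of the monoid, `a^i ≼ a^j` iff `i ≤ j` and
`i ≡ j [MOD s]`, so two elements are comparable exactly when their exponents are congruent
mod `s`. Incomparable elements therefore have no common bound inside the monoid, and their
join is `⊤`. The normal form `[n]` keeps `n mod s` and is monotone on each residue class.
Hence multiplication is monotone, and it maps incomparable pairs to incomparable pairs, which
gives distributivity over binary joins. Residuals exist because `R` is finite: `x \ z` is the
join of `{y | x y ≼ z}`, which lies in that set since `y ↦ x y` preserves `⊔` and `⊥`.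
-/

theorem SupBotHom.exists_isGreatest_preimage_Iic {α β : Type*} [SemilatticeSup α] [OrderBot α]
    [Fintype α] [SemilatticeSup β] [OrderBot β] (f : SupBotHom α β) (z : β) :
    ∃ m, IsGreatest (f ⁻¹' Set.Iic z) m := by
  classical
  let S := Finset.univ.filter fun y => f y ≤ z
  refine ⟨S.sup id, ?_, fun y hy => Finset.le_sup (f := id) (by simpa [S] using hy)⟩
  show f (S.sup id) ≤ z
  rw [map_finset_sup]
  exact Finset.sup_le fun y hy => (Finset.mem_filter.1 hy).2

section CycIdx

variable {r s n : ℕ}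

lemma cycIdx_of_lt (h : n < r + s) : cycIdx r s n = n := if_pos h

lemma cycIdx_of_le (h : r ≤ n) : cycIdx r s n = r + (n - r) % s := by
  unfold cycIdx
  split_ifs with h'
  · rw [Nat.mod_eq_of_lt (by omega)]
    omega
  · rfl

lemma le_cycIdx (h : r ≤ n) : r ≤ cycIdx r s n := by
  rw [cycIdx_of_le h]
  omega

lemma cycIdx_modEq (n : ℕ) : cycIdx r s n ≡ n [MOD s] := by
  unfold cycIdx
  split_ifs with h
  · rfl
  · calc r + (n - r) % s ≡ r + (n - r) [MOD s] := (Nat.mod_modEq _ _).add_left r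
      _ = n := by omega

lemma cycIdx_congr {m : ℕ} (hm : r ≤ m) (hn : r ≤ n) (h : m ≡ n [MOD s]) :
    cycIdx r s m = cycIdx r s n := by
  have h' : m - r ≡ n - r [MOD s] :=
    Nat.ModEq.add_right_cancel' r (by rwa [Nat.sub_add_cancel hm, Nat.sub_add_cancel hn])
  rw [cycIdx_of_le hm, cycIdx_of_le hn]
  exact congrArg (r + ·) h'

lemma cycIdx_cycIdx_add (m n : ℕ) :
    cycIdx r s (cycIdx r s m + n) = cycIdx r s (m + n) := by
  rcases lt_or_ge m (r + s) with hm | hm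
  · rw [cycIdx_of_lt hm]
  · have : r ≤ cycIdx r s m := le_cycIdx (by omega)
    exact cycIdx_congr (by omega) (by omega) ((cycIdx_modEq m).add_right n)

lemma cycIdx_add_cycIdx (m n : ℕ) :
    cycIdx r s (m + cycIdx r s n) = cycIdx r s (m + n) := by
  rw [Nat.add_comm, cycIdx_cycIdx_add, Nat.add_comm]

lemma cycIdx_mono {m : ℕ} (hle : m ≤ n) (h : m ≡ n [MOD s]) :
    cycIdx r s m ≤ cycIdx r s n := by
  rcases lt_or_ge n (r + s) with hn | hn
  · rwa [cycIdx_of_lt hn, cycIdx_of_lt (by omega)]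
  rcases lt_or_ge m r with hm | hm
  · have : r ≤ cycIdx r s n := le_cycIdx (by omega)
    rw [cycIdx_of_lt (by omega)]
    omega
  · exact (cycIdx_congr hm (by omega) h).le

end CycIdx

section Order

variable {r s : ℕ}

lemma cycLe_inl_iff {i j : Fin (r + s)} :
    cycLe r s (.inl i) (.inl j) ↔ (i : ℕ) ≤ j ∧ (i : ℕ) ≡ j [MOD s] := by
  constructor
  · rintro ⟨n, hn⟩
    exact ⟨by omega, by rw [hn]; exact (Nat.add_mul_mod_self_right _ _ _).symm⟩
  · rintro ⟨hle, hmod⟩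
    obtain ⟨c, hc⟩ := (Nat.modEq_iff_dvd' hle).1 hmod
    exact ⟨c, by rw [Nat.mul_comm]; omega⟩

lemma cycLe_refl (x : Fin (r + s) ⊕ Bool) : cycLe r s x x := by
  rcases x with i | _ | _
  · exact cycLe_inl_iff.2 ⟨le_rfl, rfl⟩
  all_goals trivial

lemma cycLe_bot (x : Fin (r + s) ⊕ Bool) : cycLe r s (.inr false) x := by
  rcases x with _ | _ | _ <;> trivial

lemma cycLe_top (x : Fin (r + s) ⊕ Bool) : cycLe r s x (.inr true) := by
  rcases x with _ | _ | _ <;> trivial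

lemma cycLe_antisymm (x y : Fin (r + s) ⊕ Bool) (hxy : cycLe r s x y) (hyx : cycLe r s y x) :
    x = y := by
  rcases x with i | _ | _ <;> rcases y with j | _ | _ <;> first | rfl | contradiction | skip
  exact congrArg _ (Fin.ext (le_antisymm (cycLe_inl_iff.1 hxy).1 (cycLe_inl_iff.1 hyx).1))

lemma cycLe_trans (x y z : Fin (r + s) ⊕ Bool) (hxy : cycLe r s x y) (hyz : cycLe r s y z) :
    cycLe r s x z := by
  rcases x with i | _ | _ <;> rcases y with j | _ | _ <;> rcases z with k | _ | _ <;>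
    first | trivial | contradiction | skip
  rw [cycLe_inl_iff] at *
  exact ⟨hxy.1.trans hyz.1, hxy.2.trans hyz.2⟩

lemma exists_inl_of_not_cycLe {x y : Fin (r + s) ⊕ Bool} (hxy : ¬ cycLe r s x y)
    (hyx : ¬ cycLe r s y x) :
    ∃ i j : Fin (r + s), x = .inl i ∧ y = .inl j ∧ ¬ (i : ℕ) ≡ j [MOD s] := by
  rcases x with i | _ | _ <;> rcases y with j | _ | _ <;>
    first | exact absurd trivial hxy | exact absurd trivial hyx | skip
  refine ⟨i, j, rfl, rfl, fun h => ?_⟩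
  rcases le_total (i : ℕ) j with hij | hji
  · exact hxy (cycLe_inl_iff.2 ⟨hij, h⟩)
  · exact hyx (cycLe_inl_iff.2 ⟨hji, h.symm⟩)

lemma eq_top_of_not_cycLe {x y z : Fin (r + s) ⊕ Bool} (hxy : ¬ cycLe r s x y)
    (hyx : ¬ cycLe r s y x) (hxz : cycLe r s x z) (hyz : cycLe r s y z) : z = .inr true := by
  obtain ⟨i, j, rfl, rfl, hij⟩ := exists_inl_of_not_cycLe hxy hyx
  rcases z with k | _ | _
  · exact absurd ((cycLe_inl_iff.1 hxz).2.trans (cycLe_inl_iff.1 hyz).2.symm) hij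
  · exact False.elim hxz
  · rfl

lemma eq_bot_of_not_cycLe {x y z : Fin (r + s) ⊕ Bool} (hxy : ¬ cycLe r s x y)
    (hyx : ¬ cycLe r s y x) (hzx : cycLe r s z x) (hzy : cycLe r s z y) : z = .inr false := by
  obtain ⟨i, j, rfl, rfl, hij⟩ := exists_inl_of_not_cycLe hxy hyx
  rcases z with k | _ | _
  · exact absurd ((cycLe_inl_iff.1 hzx).2.symm.trans (cycLe_inl_iff.1 hzy).2) hij
  · rfl
  · exact False.elim hzx

lemma cycJoin_of_le {x y : Fin (r + s) ⊕ Bool} (h : cycLe r s x y) : cycJoin r s x y = y :=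
  if_pos h

lemma cycJoin_of_ge {x y : Fin (r + s) ⊕ Bool} (h : cycLe r s y x) : cycJoin r s x y = x := by
  by_cases hxy : cycLe r s x y
  · rw [cycJoin_of_le hxy, cycLe_antisymm x y hxy h]
  · exact (if_neg hxy).trans (if_pos h)

lemma cycJoin_of_not_cycLe {x y : Fin (r + s) ⊕ Bool} (hxy : ¬ cycLe r s x y)
    (hyx : ¬ cycLe r s y x) : cycJoin r s x y = .inr true :=
  (if_neg hxy).trans (if_neg hyx)

lemma cycJoin_isLUB (x y : Fin (r + s) ⊕ Bool) :
    cycLe r s x (cycJoin r s x y) ∧ cycLe r s y (cycJoin r s x y) ∧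
      ∀ z, cycLe r s x z → cycLe r s y z → cycLe r s (cycJoin r s x y) z := by
  unfold cycJoin
  split_ifs with hxy hyx
  · exact ⟨hxy, cycLe_refl y, fun _ _ hyz => hyz⟩
  · exact ⟨cycLe_refl x, hyx, fun _ hxz _ => hxz⟩
  · refine ⟨cycLe_top x, cycLe_top y, fun z hxz hyz => ?_⟩
    rw [eq_top_of_not_cycLe hxy hyx hxz hyz]
    exact cycLe_refl _

lemma cycMeet_isGLB (x y : Fin (r + s) ⊕ Bool) :
    cycLe r s (cycMeet r s x y) x ∧ cycLe r s (cycMeet r s x y) y ∧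
      ∀ z, cycLe r s z x → cycLe r s z y → cycLe r s z (cycMeet r s x y) := by
  unfold cycMeet
  split_ifs with hxy hyx
  · exact ⟨cycLe_refl x, hxy, fun _ hzx _ => hzx⟩
  · exact ⟨hyx, cycLe_refl y, fun _ _ hzy => hzy⟩
  · refine ⟨cycLe_bot x, cycLe_bot y, fun z hzx hzy => ?_⟩
    rw [eq_bot_of_not_cycLe hxy hyx hzx hzy]
    exact cycLe_refl _

variable (r s) in
/-- `R = M ∪ {⊥, ⊤}` as a type of its own: `Fin (r + s) ⊕ Bool` already carries the
disjoint-sum order. -/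
def CycR : Type := Fin (r + s) ⊕ Bool

instance : Fintype (CycR r s) := inferInstanceAs (Fintype (Fin (r + s) ⊕ Bool))

noncomputable instance : SemilatticeSup (CycR r s) where
  le := cycLe r s
  le_refl := cycLe_refl
  le_trans := cycLe_trans
  le_antisymm := cycLe_antisymm
  sup := cycJoin r s
  le_sup_left x y := (cycJoin_isLUB x y).1
  le_sup_right x y := (cycJoin_isLUB x y).2.1
  sup_le x y z := (cycJoin_isLUB x y).2.2 z

instance : OrderBot (CycR r s) where
  bot := .inr false
  bot_le := cycLe_bot

end Order

section Mul

variable {r s : ℕ} (hs : 1 ≤ s)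

lemma cycRMul_comm (x y : Fin (r + s) ⊕ Bool) : cycRMul r s hs x y = cycRMul r s hs y x := by
  rcases x with i | _ | _ <;> rcases y with j | _ | _ <;> try rfl
  exact congrArg Sum.inl (Fin.ext (congrArg (cycIdx r s) (Nat.add_comm i j)))

lemma cycRMul_assoc (x y z : Fin (r + s) ⊕ Bool) :
    cycRMul r s hs (cycRMul r s hs x y) z = cycRMul r s hs x (cycRMul r s hs y z) := by
  rcases x with i | _ | _ <;> rcases y with j | _ | _ <;> rcases z with k | _ | _ <;> try rfl
  refine congrArg Sum.inl (Fin.ext ?_)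
  show cycIdx r s (cycIdx r s (i + j) + k) = cycIdx r s (i + cycIdx r s (j + k))
  rw [cycIdx_cycIdx_add, cycIdx_add_cycIdx, Nat.add_assoc]

lemma cycRMul_one (h : 0 < r + s) (x : Fin (r + s) ⊕ Bool) :
    cycRMul r s hs (.inl ⟨0, h⟩) x = x := by
  rcases x with i | _ | _ <;> try rfl
  exact congrArg Sum.inl (Fin.ext ((congrArg (cycIdx r s) (Nat.zero_add i)).trans
    (cycIdx_of_lt i.isLt)))

lemma cycRMul_bot (x : Fin (r + s) ⊕ Bool) : cycRMul r s hs x (.inr false) = .inr false := by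
  rcases x with _ | _ | _ <;> rfl

lemma cycRMul_mono_right (x : Fin (r + s) ⊕ Bool) {y z : Fin (r + s) ⊕ Bool}
    (h : cycLe r s y z) : cycLe r s (cycRMul r s hs x y) (cycRMul r s hs x z) := by
  rcases x with i | _ | _ <;> rcases y with j | _ | _ <;> rcases z with k | _ | _ <;>
    first | trivial | contradiction | skip
  obtain ⟨hjk, hmod⟩ := cycLe_inl_iff.1 h
  have hmod' : (i + j : ℕ) ≡ i + k [MOD s] := hmod.add_left i
  exact cycLe_inl_iff.2 ⟨cycIdx_mono (by omega) hmod',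
    (cycIdx_modEq _).trans (hmod'.trans (cycIdx_modEq _).symm)⟩

lemma cycRMul_mono_left (x : Fin (r + s) ⊕ Bool) {y z : Fin (r + s) ⊕ Bool}
    (h : cycLe r s y z) : cycLe r s (cycRMul r s hs y x) (cycRMul r s hs z x) := by
  rw [cycRMul_comm hs y, cycRMul_comm hs z]
  exact cycRMul_mono_right hs x h

lemma not_cycLe_cycMul {i j k : Fin (r + s)} (h : ¬ (j : ℕ) ≡ k [MOD s]) :
    ¬ cycLe r s (.inl (cycMul r s hs i j)) (.inl (cycMul r s hs i k)) := fun hle =>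
  h (Nat.ModEq.add_left_cancel' i
    ((cycIdx_modEq _).symm.trans ((cycLe_inl_iff.1 hle).2.trans (cycIdx_modEq _))))

lemma cycRMul_cycJoin (x y z : Fin (r + s) ⊕ Bool) :
    cycRMul r s hs x (cycJoin r s y z) =
      cycJoin r s (cycRMul r s hs x y) (cycRMul r s hs x z) := by
  by_cases hyz : cycLe r s y z
  · rw [cycJoin_of_le hyz, cycJoin_of_le (cycRMul_mono_right hs x hyz)]
  by_cases hzy : cycLe r s z y
  · rw [cycJoin_of_ge hzy, cycJoin_of_ge (cycRMul_mono_right hs x hzy)]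
  obtain ⟨j, k, rfl, rfl, hjk⟩ := exists_inl_of_not_cycLe hyz hzy
  rw [cycJoin_of_not_cycLe hyz hzy]
  rcases x with i | _ | _
  · exact (cycJoin_of_not_cycLe (not_cycLe_cycMul hs hjk)
      (not_cycLe_cycMul hs fun h => hjk h.symm)).symm
  all_goals exact (cycJoin_of_le (cycLe_refl _)).symm

lemma cycJoin_cycRMul (x y z : Fin (r + s) ⊕ Bool) :
    cycRMul r s hs (cycJoin r s y z) x =
      cycJoin r s (cycRMul r s hs y x) (cycRMul r s hs z x) := by
  rw [cycRMul_comm hs, cycRMul_cycJoin, cycRMul_comm hs x, cycRMul_comm hs x]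

noncomputable def cycRMulHom (x : CycR r s) : SupBotHom (CycR r s) (CycR r s) where
  toFun := cycRMul r s hs x
  map_sup' := cycRMul_cycJoin hs x
  map_bot' := cycRMul_bot hs x

lemma cycRMul_exists_ldiv (x z : Fin (r + s) ⊕ Bool) :
    ∃ m, cycLe r s (cycRMul r s hs x m) z ∧
      ∀ y, cycLe r s (cycRMul r s hs x y) z → cycLe r s y m :=
  let ⟨m, hm, hmax⟩ := (cycRMulHom hs x).exists_isGreatest_preimage_Iic (α := CycR r s) z
  ⟨m, hm, fun _ hy => hmax hy⟩

lemma cycRMul_exists_rdiv (x z : Fin (r + s) ⊕ Bool) :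
    ∃ m, cycLe r s (cycRMul r s hs m x) z ∧
      ∀ y, cycLe r s (cycRMul r s hs y x) z → cycLe r s y m := by
  simpa only [cycRMul_comm hs _ x] using cycRMul_exists_ldiv hs x z

end Mul

/-- The extension of a finite cyclic monoid of index `r` and period `s ≥ 1` by bounds
`⊥, ⊤`, with the unilinear order, is a lattice-ordered monoid whose multiplication is
order-preserving and distributes over binary joins; hence it is the reduct of a
(compact unilinear) residuated lattice. -/
theorem stmt_16 (r s : ℕ) (hs : 1 ≤ s) :
    -- cycLe is a partial order
    (∀ x : Fin (r + s) ⊕ Bool, cycLe r s x x) ∧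
    (∀ x y : Fin (r + s) ⊕ Bool, cycLe r s x y → cycLe r s y x → x = y) ∧
    (∀ x y z : Fin (r + s) ⊕ Bool, cycLe r s x y → cycLe r s y z → cycLe r s x z) ∧
    -- with bottom `⊥` and top `⊤`
    (∀ x : Fin (r + s) ⊕ Bool, cycLe r s (Sum.inr false) x ∧ cycLe r s x (Sum.inr true)) ∧
    -- cycJoin is the least upper bound and cycMeet the greatest lower bound
    (∀ x y : Fin (r + s) ⊕ Bool, cycLe r s x (cycJoin r s x y) ∧ cycLe r s y (cycJoin r s x y) ∧
      ∀ z, cycLe r s x z → cycLe r s y z → cycLe r s (cycJoin r s x y) z) ∧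
    (∀ x y : Fin (r + s) ⊕ Bool, cycLe r s (cycMeet r s x y) x ∧ cycLe r s (cycMeet r s x y) y ∧
      ∀ z, cycLe r s z x → cycLe r s z y → cycLe r s z (cycMeet r s x y)) ∧
    -- the multiplication is a monoid operation with identity `a^0`
    (∀ x y z : Fin (r + s) ⊕ Bool,
      cycRMul r s hs (cycRMul r s hs x y) z = cycRMul r s hs x (cycRMul r s hs y z)) ∧
    (∀ x : Fin (r + s) ⊕ Bool,
      cycRMul r s hs (Sum.inl (⟨0, by omega⟩ : Fin (r + s))) x = x ∧
      cycRMul r s hs x (Sum.inl (⟨0, by omega⟩ : Fin (r + s))) = x) ∧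
    -- multiplication is order-preserving
    (∀ x y z : Fin (r + s) ⊕ Bool, cycLe r s y z →
      cycLe r s (cycRMul r s hs x y) (cycRMul r s hs x z) ∧
      cycLe r s (cycRMul r s hs y x) (cycRMul r s hs z x)) ∧
    -- multiplication distributes over binary joins
    (∀ x y z : Fin (r + s) ⊕ Bool,
      cycRMul r s hs x (cycJoin r s y z) = cycJoin r s (cycRMul r s hs x y) (cycRMul r s hs x z) ∧
      cycRMul r s hs (cycJoin r s y z) x = cycJoin r s (cycRMul r s hs y x) (cycRMul r s hs z x)) ∧
    -- the division sets have maxima, so we get the reduct of a residuated lattice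
    (∀ x z : Fin (r + s) ⊕ Bool,
      (∃ m, cycLe r s (cycRMul r s hs x m) z ∧
        ∀ y, cycLe r s (cycRMul r s hs x y) z → cycLe r s y m) ∧
      (∃ m, cycLe r s (cycRMul r s hs m x) z ∧
        ∀ y, cycLe r s (cycRMul r s hs y x) z → cycLe r s y m)) := by
  refine ⟨cycLe_refl, cycLe_antisymm, cycLe_trans, fun x => ⟨cycLe_bot x, cycLe_top x⟩,
    cycJoin_isLUB, cycMeet_isGLB, cycRMul_assoc hs, fun x => ⟨cycRMul_one hs _ x, ?_⟩,
    fun x _ _ h => ⟨cycRMul_mono_right hs x h, cycRMul_mono_left hs x h⟩,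
    fun x y z => ⟨cycRMul_cycJoin hs x y z, cycJoin_cycRMul hs x y z⟩,
    fun x z => ⟨cycRMul_exists_ldiv hs x z, cycRMul_exists_rdiv hs x z⟩⟩
  rw [cycRMul_comm hs]
  exact cycRMul_one hs _ x
end

section
/- Let R be a compact unilinear residuated lattice that is not a chain, with bounds ⊥ ≠ ⊤, let M := R \ {⊥, ⊤}, let ≡ be the comparability relation on M (x ≡ y iff x ≤ y or y ≤ x), and let H = {x ∈ M : x ≡ 1}. Assume ≡ is admissible: {x·h : h ∈ H} = {y ∈ M : y ≡ x} = {h·x : h ∈ H} for every x ∈ M, and assume there is a selection of representatives x ↦ x̄ on M with x̄ ≡ x, x̄ = ȳ whenever x ≡ y, 1̄ = 1, and such that for every x ∈ M the maps h ↦ x̄·h and h ↦ h·x̄ are injective on H. Then for every x ∈ M there exists a bijection φ_x : H → H that is simultaneously a monoid homomorphism and an order isomorphism of the chain H, satisfying x̄·h = φ_x(h)·x̄ for all h ∈ H; moreover, for all x, y ∈ M there exists an invertible element f(x,y) of the monoid H, depending only on the ≡-classes of x and y, such that the representative of x·y satisfies (x·y)̄ = f(x,y)·x̄·ȳ. -/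
/-- Membership in `M = R \ {⊥, ⊤}`. -/
def InMid {R : Type*} [Lattice R] [BoundedOrder R] (x : R) : Prop := x ≠ ⊥ ∧ x ≠ ⊤

/-- Comparability. -/
def Cmp {R : Type*} [Lattice R] (x y : R) : Prop := x ≤ y ∨ y ≤ x

/-- `H = {x ∈ M : x ≡ 1}`, the chain of `1`. -/
def Hset (R : Type*) [Lattice R] [BoundedOrder R] [Monoid R] : Set R :=
  {h : R | InMid h ∧ Cmp h 1}

lemma myCmp_symm {R : Type*} [Lattice R] {x y : R} (h : Cmp x y) : Cmp y x := Or.symm h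

lemma myMul_le_right {R : Type*} [Lattice R] [Monoid R] (rd : R → R → R)
    (hr : ∀ x y z : R, x * y ≤ z ↔ x ≤ rd z y) {a b : R} (c : R) (h : a ≤ b) :
    a * c ≤ b * c :=
  (hr a c (b * c)).mpr (h.trans ((hr b c (b * c)).mp le_rfl))

lemma myMul_le_left {R : Type*} [Lattice R] [Monoid R] (ld : R → R → R)
    (hl : ∀ x y z : R, x * y ≤ z ↔ y ≤ ld x z) {a b : R} (c : R) (h : a ≤ b) :
    c * a ≤ c * b :=
  (hl c a (c * b)).mpr (h.trans ((hl c b (c * b)).mp le_rfl))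

lemma myCmp_trans {R : Type*} [Lattice R] [BoundedOrder R]
    (huni : ∀ x y : R, ¬ x ≤ y → ¬ y ≤ x → x ⊔ y = ⊤ ∧ x ⊓ y = ⊥)
    {a b c : R} (hb : InMid b) (h1 : Cmp a b) (h2 : Cmp b c) : Cmp a c := by
  by_contra hc
  simp only [Cmp, not_or] at hc
  obtain ⟨ht, hbt⟩ := huni a c hc.1 hc.2
  rcases h1 with h1 | h1 <;> rcases h2 with h2 | h2
  · exact hc.1 (h1.trans h2)
  · have := sup_le h1 h2
    rw [ht] at this
    exact hb.2 (top_le_iff.mp this)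
  · have := le_inf h1 h2
    rw [hbt] at this
    exact hb.1 (le_bot_iff.mp this)
  · exact hc.2 (h2.trans h1)

/-- In a non-linear compact unilinear residuated lattice with an admissible comparability
congruence and a `K`-cancellative selection of representatives, every `x ∈ M` yields an
order- and monoid-automorphism `φ_x` of the chain `H` with `x̄·h = φ_x(h)·x̄`, and there is a
2-cocycle-like function `f` with values invertible in `H`, depending only on comparability
classes, such that `(x·y)̄ = f(x,y)·x̄·ȳ`. -/
theorem stmt_19 {R : Type*} [Lattice R] [BoundedOrder R] [Monoid R]
    (ld rd : R → R → R)
    (hl : ∀ x y z : R, x * y ≤ z ↔ y ≤ ld x z)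
    (hr : ∀ x y z : R, x * y ≤ z ↔ x ≤ rd z y)
    (hbt : (⊥ : R) ≠ ⊤)
    (hnl : ∃ x y : R, ¬ x ≤ y ∧ ¬ y ≤ x)
    (huni : ∀ x y : R, ¬ x ≤ y → ¬ y ≤ x → x ⊔ y = ⊤ ∧ x ⊓ y = ⊥)
    (htu : ∀ x : R, x ≠ ⊥ → x * ⊤ = ⊤ ∧ ⊤ * x = ⊤)
    (hMcl : ∀ x y : R, InMid x → InMid y → InMid (x * y))
    -- admissibility of the comparability relation
    (hadm : ∀ x : R, InMid x →
      ((fun h => x * h) '' Hset R = {y : R | InMid y ∧ Cmp y x} ∧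
       (fun h => h * x) '' Hset R = {y : R | InMid y ∧ Cmp y x}))
    -- a selection of representatives making H K-cancellative
    (bar : R → R)
    (hbar_mem : ∀ x : R, InMid x → InMid (bar x) ∧ Cmp (bar x) x)
    (hbar_const : ∀ x y : R, InMid x → InMid y → Cmp x y → bar x = bar y)
    (hbar_one : bar 1 = 1)
    (hbar_canc : ∀ x : R, InMid x → ∀ h ∈ Hset R, ∀ h' ∈ Hset R,
      (bar x * h = bar x * h' → h = h') ∧ (h * bar x = h' * bar x → h = h')) :
    -- the conjugation automorphisms φ_x of H
    (∀ x : R, InMid x → ∃ φx : R → R,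
      Set.BijOn φx (Hset R) (Hset R) ∧
      φx 1 = 1 ∧
      (∀ h ∈ Hset R, ∀ h' ∈ Hset R, φx (h * h') = φx h * φx h') ∧
      (∀ h ∈ Hset R, ∀ h' ∈ Hset R, (h ≤ h' ↔ φx h ≤ φx h')) ∧
      (∀ h ∈ Hset R, bar x * h = φx h * bar x)) ∧
    -- the 2-cocycle f
    (∃ f : R → R → R, ∀ x y : R, InMid x → InMid y →
      f x y ∈ Hset R ∧
      (∃ g ∈ Hset R, f x y * g = 1 ∧ g * f x y = 1) ∧
      (∀ x' y' : R, InMid x' → InMid y' → Cmp x x' → Cmp y y' → f x y = f x' y') ∧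
      bar (x * y) = f x y * bar x * bar y) := by
  classical
  -- basic membership/surjectivity consequences of admissibility
  have memL : ∀ x : R, InMid x → ∀ h ∈ Hset R, InMid (x * h) ∧ Cmp (x * h) x := by
    intro x hx h hh
    have heq := (hadm x hx).1
    have hmem : x * h ∈ (fun h => x * h) '' Hset R := ⟨h, hh, rfl⟩
    rw [heq] at hmem
    exact hmem
  have memR : ∀ x : R, InMid x → ∀ h ∈ Hset R, InMid (h * x) ∧ Cmp (h * x) x := by
    intro x hx h hh
    have heq := (hadm x hx).2
    have hmem : h * x ∈ (fun h => h * x) '' Hset R := ⟨h, hh, rfl⟩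
    rw [heq] at hmem
    exact hmem
  have surjL : ∀ x : R, InMid x → ∀ y : R, InMid y → Cmp y x → ∃ h ∈ Hset R, x * h = y := by
    intro x hx y hy hyx
    have heq := (hadm x hx).1
    have hmem : y ∈ {y : R | InMid y ∧ Cmp y x} := ⟨hy, hyx⟩
    rw [← heq] at hmem
    obtain ⟨h, hh, he⟩ := hmem
    exact ⟨h, hh, he⟩
  have surjR : ∀ x : R, InMid x → ∀ y : R, InMid y → Cmp y x → ∃ h ∈ Hset R, h * x = y := by
    intro x hx y hy hyx
    have heq := (hadm x hx).2
    have hmem : y ∈ {y : R | InMid y ∧ Cmp y x} := ⟨hy, hyx⟩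
    rw [← heq] at hmem
    obtain ⟨h, hh, he⟩ := hmem
    exact ⟨h, hh, he⟩
  -- a witness in M
  obtain ⟨a0, b0, hab1, hab2⟩ := hnl
  have ha0 : InMid a0 := ⟨fun h => hab1 (h ▸ bot_le), fun h => hab2 (h ▸ le_top)⟩
  -- 1 ∈ M and 1 ∈ H
  have one_ne_top : (1 : R) ≠ ⊤ := by
    intro h
    have : a0 = ⊤ := by rw [← mul_one a0, h]; exact (htu a0 ha0.1).1
    exact ha0.2 this
  have one_ne_bot : (1 : R) ≠ ⊥ := by
    intro h
    have hbz : a0 * (⊥ : R) = ⊥ := le_antisymm ((hl a0 ⊥ ⊥).mpr bot_le) bot_le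
    have : a0 = ⊥ := by rw [← mul_one a0, h, hbz]
    exact ha0.1 this
  have hM1 : InMid (1 : R) := ⟨one_ne_bot, one_ne_top⟩
  have h1H : (1 : R) ∈ Hset R := ⟨hM1, Or.inl le_rfl⟩
  -- H is a chain
  have hHchain : ∀ h ∈ Hset R, ∀ h' ∈ Hset R, Cmp h h' := by
    intro h hh h' hh'
    exact myCmp_trans huni hM1 hh.2 (myCmp_symm hh'.2)
  -- H is closed under multiplication
  have hHmul : ∀ h ∈ Hset R, ∀ h' ∈ Hset R, h * h' ∈ Hset R := by
    intro h hh h' hh'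
    refine ⟨hMcl _ _ hh.1 hh'.1, ?_⟩
    by_contra hc
    simp only [Cmp, not_or] at hc
    obtain ⟨_, hbot⟩ := huni (h * h') 1 hc.1 hc.2
    rcases hh.2 with h1 | h1 <;> rcases hh'.2 with h2 | h2
    · refine hc.1 ?_
      calc h * h' ≤ 1 * h' := myMul_le_right rd hr h' h1
        _ = h' := one_mul h'
        _ ≤ 1 := h2
    · -- h ≤ 1 ≤ h' : then h ≤ h*h' and h ≤ 1, so h ≤ ⊥
      have e1 : h ≤ h * h' := by
        have := myMul_le_left ld hl h h2
        rwa [mul_one] at this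
      have : h ≤ (⊥ : R) := by
        rw [← hbot]; exact le_inf e1 h1
      exact hh.1.1 (le_bot_iff.mp this)
    · -- 1 ≤ h, h' ≤ 1 : then h' ≤ h*h' and h' ≤ 1
      have e1 : h' ≤ h * h' := by
        have := myMul_le_right rd hr h' h1
        rwa [one_mul] at this
      have : h' ≤ (⊥ : R) := by
        rw [← hbot]; exact le_inf e1 h2
      exact hh'.1.1 (le_bot_iff.mp this)
    · refine hc.2 ?_
      calc (1 : R) ≤ h' := h2
        _ = 1 * h' := (one_mul h').symm
        _ ≤ h * h' := myMul_le_right rd hr h' h1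
  -- every element of H is invertible
  have hinv : ∀ h ∈ Hset R, ∃ g ∈ Hset R, h * g = 1 ∧ g * h = 1 := by
    intro h hh
    have hbM := (hbar_mem a0 ha0).1
    set b := bar a0 with hb
    -- right inverse
    have h1 := memL b hbM h hh
    obtain ⟨k, hk, hke⟩ := surjL (b * h) h1.1 b hbM (myCmp_symm h1.2)
    have hk1 : h * k = 1 := by
      have he : b * (h * k) = b * 1 := by rw [mul_one, ← mul_assoc]; exact hke
      exact (hbar_canc a0 ha0 (h * k) (hHmul h hh k hk) 1 h1H).1 he
    -- left inverse
    have h2 := memR b hbM h hh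
    obtain ⟨k', hk', hke'⟩ := surjR (h * b) h2.1 b hbM (myCmp_symm h2.2)
    have hk'1 : k' * h = 1 := by
      have he : (k' * h) * b = 1 * b := by rw [one_mul, mul_assoc]; exact hke'
      exact (hbar_canc a0 ha0 (k' * h) (hHmul k' hk' h hh) 1 h1H).2 he
    have hkk' : k = k' := by
      calc k = 1 * k := (one_mul k).symm
        _ = (k' * h) * k := by rw [hk'1]
        _ = k' * (h * k) := mul_assoc _ _ _
        _ = k' := by rw [hk1, mul_one]
    exact ⟨k, hk, hk1, hkk' ▸ hk'1⟩
  -- multiplication respects comparability classes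
  have hmulcmp : ∀ a b : R, InMid a → InMid b → ∀ a' b' : R, InMid a' → InMid b' →
      Cmp a a' → Cmp b b' → Cmp (a * b) (a' * b') := by
    intro a b ha hb a' b' ha' hb' haa hbb
    obtain ⟨h, hh, hha⟩ := surjL a ha a' ha' (myCmp_symm haa)
    obtain ⟨k, hk, hkb⟩ := surjR b hb b' hb' (myCmp_symm hbb)
    have hhk := hHmul h hh k hk
    have h1 := memL a ha (h * k) hhk
    obtain ⟨m, hm, hma⟩ := surjR a ha _ h1.1 h1.2
    have hab : InMid (a * b) := hMcl a b ha hb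
    have h2 := memR (a * b) hab m hm
    have heq : a' * b' = m * (a * b) := by
      rw [← hha, ← hkb, ← mul_assoc, mul_assoc a h k, ← hma, mul_assoc]
    exact myCmp_symm (heq ▸ h2.2)
  -- general right cancellation of elements of M against H
  have hcancR : ∀ z : R, InMid z → ∀ h ∈ Hset R, ∀ h' ∈ Hset R, h * z = h' * z → h = h' := by
    intro z hz h hh h' hh' he
    have hbz := hbar_mem z hz
    obtain ⟨k, hk, hkz⟩ := surjL (bar z) hbz.1 z hz (myCmp_symm hbz.2)
    obtain ⟨g, hg, hgk, _⟩ := hinv k hk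
    have e1 : (h * bar z) * k = (h' * bar z) * k := by
      rw [mul_assoc, hkz, mul_assoc, hkz]; exact he
    have e2 : h * bar z = h' * bar z := by
      have := congrArg (· * g) e1
      simpa only [mul_assoc, hgk, mul_one] using this
    exact (hbar_canc z hz h hh h' hh').2 e2
  constructor
  · -- the automorphisms φ_x
    intro x hx
    have hbx := hbar_mem x hx
    have key : ∀ h : R, ∃ k : R, h ∈ Hset R → k ∈ Hset R ∧ k * bar x = bar x * h := by
      intro h
      by_cases hh : h ∈ Hset R
      · have h1 := memL (bar x) hbx.1 h hh
        obtain ⟨k, hk, hke⟩ := surjR (bar x) hbx.1 _ h1.1 h1.2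
        exact ⟨k, fun _ => ⟨hk, hke⟩⟩
      · exact ⟨1, fun h' => absurd h' hh⟩
    choose φ hφ using key
    have cancel := hbar_canc x hx
    refine ⟨φ, ⟨fun h hh => (hφ h hh).1, fun h hh h' hh' he => ?_, fun k hk => ?_⟩, ?_, ?_, ?_,
      fun h hh => ((hφ h hh).2).symm⟩
    · -- injective on H
      have e : bar x * h = bar x * h' := by
        rw [← (hφ h hh).2, ← (hφ h' hh').2, he]
      exact (cancel h hh h' hh').1 e
    · -- surjective onto H
      have h1 := memR (bar x) hbx.1 k hk
      obtain ⟨h, hh, hhe⟩ := surjL (bar x) hbx.1 _ h1.1 h1.2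
      refine ⟨h, hh, ?_⟩
      have e : φ h * bar x = k * bar x := by rw [(hφ h hh).2, hhe]
      exact (cancel (φ h) (hφ h hh).1 k hk).2 e
    · -- φ 1 = 1
      have e : φ 1 * bar x = 1 * bar x := by rw [(hφ 1 h1H).2, mul_one, one_mul]
      exact (cancel (φ 1) (hφ 1 h1H).1 1 h1H).2 e
    · -- multiplicative
      intro h hh h' hh'
      have hhh' := hHmul h hh h' hh'
      have e : φ (h * h') * bar x = (φ h * φ h') * bar x := by
        calc φ (h * h') * bar x = bar x * (h * h') := (hφ _ hhh').2
          _ = (bar x * h) * h' := (mul_assoc _ _ _).symm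
          _ = (φ h * bar x) * h' := by rw [(hφ h hh).2]
          _ = φ h * (bar x * h') := mul_assoc _ _ _
          _ = φ h * (φ h' * bar x) := by rw [(hφ h' hh').2]
          _ = (φ h * φ h') * bar x := (mul_assoc _ _ _).symm
      exact (cancel (φ (h * h')) (hφ _ hhh').1 (φ h * φ h')
        (hHmul _ (hφ h hh).1 _ (hφ h' hh').1)).2 e
    · -- order isomorphism
      intro h hh h' hh'
      constructor
      · intro hle
        by_contra hc
        rcases hHchain _ (hφ h hh).1 _ (hφ h' hh').1 with h0 | h0
        · exact hc h0
        · have e1 : bar x * h ≤ bar x * h' := myMul_le_left ld hl _ hle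
          rw [← (hφ h hh).2, ← (hφ h' hh').2] at e1
          have e2 : φ h' * bar x ≤ φ h * bar x := myMul_le_right rd hr _ h0
          have e3 : φ h * bar x = φ h' * bar x := le_antisymm e1 e2
          have := (cancel (φ h) (hφ h hh).1 (φ h') (hφ h' hh').1).2 e3
          exact hc (le_of_eq this)
      · intro hle
        by_contra hc
        rcases hHchain h hh h' hh' with h0 | h0
        · exact hc h0
        · have e1 : bar x * h' ≤ bar x * h := myMul_le_left ld hl _ h0
          have e2 : φ h * bar x ≤ φ h' * bar x := myMul_le_right rd hr _ hle
          rw [(hφ h hh).2, (hφ h' hh').2] at e2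
          have e3 : bar x * h = bar x * h' := le_antisymm e2 e1
          have := (cancel h hh h' hh').1 e3
          exact hc (le_of_eq this)
  · -- the 2-cocycle f
    have key2 : ∀ x y : R, ∃ g : R, InMid x → InMid y →
        g ∈ Hset R ∧ g * (bar x * bar y) = bar (x * y) := by
      intro x y
      by_cases h : InMid x ∧ InMid y
      · obtain ⟨hx, hy⟩ := h
        have hbx := hbar_mem x hx
        have hby := hbar_mem y hy
        have hxy : InMid (x * y) := hMcl x y hx hy
        have hbxy := hbar_mem (x * y) hxy
        have hbb : InMid (bar x * bar y) := hMcl _ _ hbx.1 hby.1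
        have hc1 : Cmp (x * y) (bar x * bar y) :=
          hmulcmp x y hx hy _ _ hbx.1 hby.1 (myCmp_symm hbx.2) (myCmp_symm hby.2)
        have hc2 : Cmp (bar (x * y)) (bar x * bar y) := myCmp_trans huni hxy hbxy.2 hc1
        obtain ⟨g, hg, hge⟩ := surjR (bar x * bar y) hbb _ hbxy.1 hc2
        exact ⟨g, fun _ _ => ⟨hg, hge⟩⟩
      · exact ⟨1, fun hx hy => absurd ⟨hx, hy⟩ h⟩
    choose f hf using key2
    refine ⟨f, ?_⟩
    intro x y hx hy
    have hsp := hf x y hx hy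
    refine ⟨hsp.1, hinv _ hsp.1, ?_, by rw [mul_assoc]; exact hsp.2.symm⟩
    intro x' y' hx' hy' hxx hyy
    have hsp' := hf x' y' hx' hy'
    have hbxx : bar x = bar x' := hbar_const x x' hx hx' hxx
    have hbyy : bar y = bar y' := hbar_const y y' hy hy' hyy
    have hcxy : Cmp (x * y) (x' * y') := hmulcmp x y hx hy x' y' hx' hy' hxx hyy
    have hbar_eq : bar (x * y) = bar (x' * y') :=
      hbar_const _ _ (hMcl x y hx hy) (hMcl x' y' hx' hy') hcxy
    apply hcancR (bar x * bar y) (hMcl _ _ (hbar_mem x hx).1 (hbar_mem y hy).1)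
      _ hsp.1 _ hsp'.1
    rw [hsp.2, hbxx, hbyy, hsp'.2, hbar_eq]
end
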